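/- arXiv:1207.2886 — 2 statements merged into one kernel-verified Lean document; each statement's English description precedes it below -/
import Mathlib

section
/- (Proposition C.5, Lipschitz continuity of I.) For all π, π̃ ∈ M_1 and all u, ũ ≥ 0, one has |Iv(π,u) − Iv(π̃,ũ)| ≤ (C_v + 2[v]) |π − π̃| + C_v C_λ |u − ũ|. -/
open MeasureTheory Finset

noncomputable section

namespace PDMP

/-- Integrated jump rate `Λ_i(t) = ∫_0^t λ_i(s) ds`. -/
def Lam (lam : ℕ → ℝ → ℝ) (i : ℕ) (t : ℝ) : ℝ := ∫ s in (0:ℝ)..t, lam i s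

/-- The unnormalized filter density `Ψ_m^j(π,y,s)`. -/
def psiNum (q d : ℕ) (ts : ℕ → ℝ) (lam : ℕ → ℝ → ℝ) (Q : ℕ → ℕ → ℝ → ℝ)
    (fW : (Fin d → ℝ) → ℝ) (phi : ℕ → Fin d → ℝ)
    (m : ℕ) (p : ℕ → ℝ) (y : Fin d → ℝ) (s : ℝ) (j : ℕ) : ℝ :=
  ∑ i ∈ Finset.Icc (m + 1) q,
    p i * lam i s * Real.exp (-(Lam lam i s)) * Q i j s * fW (y - phi j)

/-- `Ψ̄_m(π,y,s) = Σ_k Ψ_m^k(π,y,s)`. -/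
def psiBar (q d : ℕ) (ts : ℕ → ℝ) (lam : ℕ → ℝ → ℝ) (Q : ℕ → ℕ → ℝ → ℝ)
    (fW : (Fin d → ℝ) → ℝ) (phi : ℕ → Fin d → ℝ)
    (m : ℕ) (p : ℕ → ℝ) (y : Fin d → ℝ) (s : ℝ) : ℝ :=
  ∑ k ∈ Finset.Icc 1 q, psiNum q d ts lam Q fW phi m p y s k

open Classical in
/-- The filter update `Ψ(π,y,s)`. -/
def Psi (q d : ℕ) (ts : ℕ → ℝ) (lam : ℕ → ℝ → ℝ) (Q : ℕ → ℕ → ℝ → ℝ)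
    (fW : (Fin d → ℝ) → ℝ) (phi : ℕ → Fin d → ℝ)
    (p : ℕ → ℝ) (y : Fin d → ℝ) (s : ℝ) : ℕ → ℝ :=
  if ∃ m, 1 ≤ m ∧ m ≤ q ∧ s = ts m then
    let m := sInf {m | 1 ≤ m ∧ m ≤ q ∧ s = ts m}
    if 0 < ∑ k ∈ Finset.Icc 1 q, Q m k (ts m) * fW (y - phi k) then
      fun j => Q m j (ts m) * fW (y - phi j) /
        (∑ k ∈ Finset.Icc 1 q, Q m k (ts m) * fW (y - phi k))
    else p
  else if ∃ m, m < q ∧ ts m < s ∧ s < ts (m + 1) then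
    let m := sInf {m | m < q ∧ ts m < s ∧ s < ts (m + 1)}
    if 0 < psiBar q d ts lam Q fW phi m p y s then
      fun j => psiNum q d ts lam Q fW phi m p y s j / psiBar q d ts lam Q fW phi m p y s
    else p
  else p

/-- ℓ¹ distance on `ℝ^q` (coordinates `1,…,q`). -/
def l1 (q : ℕ) (p p' : ℕ → ℝ) : ℝ := ∑ i ∈ Finset.Icc 1 q, |p i - p' i|

/-- Membership in the probability simplex `M_1`. -/
def mem1 (q : ℕ) (p : ℕ → ℝ) : Prop :=
  (∀ i ∈ Finset.Icc 1 q, 0 ≤ p i) ∧ ∑ i ∈ Finset.Icc 1 q, p i = 1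

/-- The operator `I`. -/
def Iop (q d : ℕ) (ts : ℕ → ℝ) (lam : ℕ → ℝ → ℝ) (Q : ℕ → ℕ → ℝ → ℝ)
    (fW : (Fin d → ℝ) → ℝ) (phi : ℕ → Fin d → ℝ)
    (v : (ℕ → ℝ) → ℝ) (p : ℕ → ℝ) (u : ℝ) : ℝ :=
  ∑ i ∈ Finset.Icc 1 q, p i *
    ∫ s in (0:ℝ)..(min u (ts i)),
      lam i s * Real.exp (-(Lam lam i s)) *
        ∫ y : Fin d → ℝ,
          v (Psi q d ts lam Q fW phi p y s) *
            ∑ j ∈ Finset.Icc 1 q, Q i j s * fW (y - phi j)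

/-- Boundary (forced-jump) term appearing in the operator `G`. -/
def bTerm (q d : ℕ) (ts : ℕ → ℝ) (lam : ℕ → ℝ → ℝ) (Q : ℕ → ℕ → ℝ → ℝ)
    (fW : (Fin d → ℝ) → ℝ) (phi : ℕ → Fin d → ℝ)
    (v : (ℕ → ℝ) → ℝ) (p : ℕ → ℝ) (i : ℕ) : ℝ :=
  p i * Real.exp (-(Lam lam i (ts i))) *
    ∫ y : Fin d → ℝ,
      v (Psi q d ts lam Q fW phi p y (ts i)) *
        ∑ j ∈ Finset.Icc 1 q, Q i j (ts i) * fW (y - phi j)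

/-- The operator `G`. -/
def Gop (q d : ℕ) (ts : ℕ → ℝ) (lam : ℕ → ℝ → ℝ) (Q : ℕ → ℕ → ℝ → ℝ)
    (fW : (Fin d → ℝ) → ℝ) (phi : ℕ → Fin d → ℝ)
    (v : (ℕ → ℝ) → ℝ) (p : ℕ → ℝ) (u : ℝ) : ℝ :=
  Iop q d ts lam Q fW phi v p u +
    ∑ i ∈ Finset.Icc 1 q, if ts i ≤ u then bTerm q d ts lam Q fW phi v p i else 0

/-- The operator `H`. -/
def Hop (q : ℕ) (ts : ℕ → ℝ) (lam : ℕ → ℝ → ℝ)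
    (g : ℕ → ℝ → ℝ) (p : ℕ → ℝ) (u : ℝ) : ℝ :=
  ∑ i ∈ Finset.Icc 1 q, if u < ts i then p i * Real.exp (-(Lam lam i u)) * g i u else 0

/-- The operator `J`. -/
def Jop (q d : ℕ) (ts : ℕ → ℝ) (lam : ℕ → ℝ → ℝ) (Q : ℕ → ℕ → ℝ → ℝ)
    (fW : (Fin d → ℝ) → ℝ) (phi : ℕ → Fin d → ℝ)
    (v : (ℕ → ℝ) → ℝ) (g : ℕ → ℝ → ℝ) (p : ℕ → ℝ) (u : ℝ) : ℝ :=
  Hop q ts lam g p u + Gop q d ts lam Q fW phi v p u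

/-- The operator `K`. -/
def Kop (q d : ℕ) (ts : ℕ → ℝ) (lam : ℕ → ℝ → ℝ) (Q : ℕ → ℕ → ℝ → ℝ)
    (fW : (Fin d → ℝ) → ℝ) (phi : ℕ → Fin d → ℝ)
    (v : (ℕ → ℝ) → ℝ) (p : ℕ → ℝ) : ℝ :=
  Gop q d ts lam Q fW phi v p (ts q)

/-- The dynamic programming operator `L(v,g)(π) = sup_{u ≥ 0} J(v,g)(π,u)`. -/
def Lop (q d : ℕ) (ts : ℕ → ℝ) (lam : ℕ → ℝ → ℝ) (Q : ℕ → ℕ → ℝ → ℝ)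
    (fW : (Fin d → ℝ) → ℝ) (phi : ℕ → Fin d → ℝ)
    (v : (ℕ → ℝ) → ℝ) (g : ℕ → ℝ → ℝ) (p : ℕ → ℝ) : ℝ :=
  ⨆ u : Set.Ici (0:ℝ), Jop q d ts lam Q fW phi v g p u.1

/-- The operator `H^m`. -/
def Hm (q : ℕ) (ts : ℕ → ℝ) (lam : ℕ → ℝ → ℝ) (m : ℕ)
    (g : ℕ → ℝ → ℝ) (p : ℕ → ℝ) (u : ℝ) : ℝ :=
  if u < ts m then Hop q ts lam g p (ts m)
  else ∑ i ∈ Finset.Icc (m + 1) q,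
    p i * Real.exp (-(Lam lam i (min u (ts (m + 1))))) * g i (min u (ts (m + 1)))

/-- The operator `G^m`. -/
def Gm (q d : ℕ) (ts : ℕ → ℝ) (lam : ℕ → ℝ → ℝ) (Q : ℕ → ℕ → ℝ → ℝ)
    (fW : (Fin d → ℝ) → ℝ) (phi : ℕ → Fin d → ℝ) (m : ℕ)
    (v : (ℕ → ℝ) → ℝ) (p : ℕ → ℝ) (u : ℝ) : ℝ :=
  if u < ts m then Gop q d ts lam Q fW phi v p (ts m)
  else Iop q d ts lam Q fW phi v p (min u (ts (m + 1))) +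
    ∑ i ∈ Finset.Icc 1 m, bTerm q d ts lam Q fW phi v p i

/-- The discretization grid `Gr_m(Δ)`. -/
def grid (ts : ℕ → ℝ) (Δ : ℝ) (m : ℕ) : Set ℝ :=
  {u | (∃ i : ℕ, 1 ≤ i ∧ ts m + i * Δ ≤ ts (m + 1) - Δ ∧ u = ts m + i * Δ) ∨
    u = ts (m + 1) - Δ}


/-! Write `Iop p u = ∫₀ᵘ Φ_p`, where `Φ_p(s) = Σ_{i : s ≤ t*_i} p_i λ_i(s) e^{-Λ_i(s)} W_i(p, s)`
and `W_i(p, s)` is the mean of `v ∘ Ψ(p, ·, s)` under the law of the observation that follows a jump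
from `x_i` at time `s`. As `|Φ_p| ≤ C_λ C_v`, `Iop` is `C_v C_λ`-Lipschitz in `u`.

For the dependence on `p`, on each flow interval `(t*_m, t*_{m+1})` one has
`Φ_p(s) = ∫ v(Ψ(p, y, s)) Ψ̄_m(p, y, s) dy` with `Ψ = Ψ_m / Ψ̄_m`. For nonnegative weights `a, b`
with normalizations `â, b̂` and total masses `A ≥ B`, writing
`v(â) A - v(b̂) B = (v(â) - v(b̂)) A + v(b̂) (A - B)` and `|â - b̂| ≤ 2 |a - b| / A` gives
`|v(â) A - v(b̂) B| ≤ (C_v + 2 [v]) |a - b|`. Since `Ψ_m` is linear in `p`, integrating in `y`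
bounds `|Φ_p(s) - Φ_p'(s)|` by `(C_v + 2 [v]) Σ_i |p_i - p'_i| λ_i(s) e^{-Λ_i(s)}`, and
`∫₀ᵗ λ_i e^{-Λ_i} = 1 - e^{-Λ_i(t)} ≤ 1`. -/

end PDMP

open scoped Interval

theorem integral_mul_exp_neg_integral_le_one {f : ℝ → ℝ} {t : ℝ} (ht : 0 ≤ t)
    (hf : IntervalIntegrable f volume 0 t) (hf0 : ∀ s ∈ Set.Icc 0 t, 0 ≤ f s) :
    ∫ s in (0:ℝ)..t, f s * Real.exp (-∫ r in (0:ℝ)..s, f r) ≤ 1 := by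
  set F : ℝ → ℝ := fun x => ∫ r in (0:ℝ)..x, f r
  set G : ℝ → ℝ := fun x => -Real.exp (-F x)
  have hG_mono : MonotoneOn G (Set.uIcc 0 t) := by
    rw [Set.uIcc_of_le ht]
    intro x hx y hy hxy
    have hint : ∀ z ∈ Set.Icc 0 t, IntervalIntegrable f volume 0 z := fun z hz =>
      hf.mono_set (Set.uIcc_subset_uIcc Set.left_mem_uIcc (by rwa [Set.uIcc_of_le ht]))
    have hFxy : 0 ≤ F y - F x := by
      simp only [F]
      rw [intervalIntegral.integral_interval_sub_left (hint y hy) (hint x hx)]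
      exact intervalIntegral.integral_nonneg hxy
        fun s hs => hf0 s ⟨hx.1.trans hs.1, hs.2.trans hy.2⟩
    simp only [G, neg_le_neg_iff, Real.exp_le_exp]
    linarith
  have hderiv : ∀ᵐ s, s ∈ Ι (0:ℝ) t → f s * Real.exp (-F s) = deriv G s := by
    filter_upwards [hf.ae_hasDerivAt_integral] with s hs hsI
    have hF : HasDerivAt F (f s) s := hs (Set.uIoc_subset_uIcc hsI) 0 Set.left_mem_uIcc
    have hG : HasDerivAt G (f s * Real.exp (-F s)) s := by
      have := (hF.fun_neg.exp).fun_neg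
      rwa [mul_neg, neg_neg, mul_comm] at this
    exact hG.deriv.symm
  calc ∫ s in (0:ℝ)..t, f s * Real.exp (-F s) = ∫ s in (0:ℝ)..t, deriv G s :=
        intervalIntegral.integral_congr_ae hderiv
    _ ≤ G t - G 0 := by
        have := hG_mono.intervalIntegral_deriv_mem_uIcc
        rw [Set.uIcc_of_le (sub_nonneg.2 (hG_mono Set.left_mem_uIcc Set.right_mem_uIcc ht))]
          at this
        exact this.2
    _ ≤ 1 := by simp [G, F]; positivity

theorem intervalIntegrable_of_norm_le {f : ℝ → ℝ} {C a b : ℝ} (hf : Measurable f)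
    (hC : ∀ s ∈ Ι a b, ‖f s‖ ≤ C) : IntervalIntegrable f volume a b :=
  (intervalIntegrable_const (c := C)).mono_fun hf.aestronglyMeasurable
    ((ae_restrict_iff' measurableSet_uIoc).2
      (ae_of_all _ fun s hs => (hC s hs).trans (le_abs_self C)))

theorem sum_abs_div_sum_sub_div_sum_le {ι : Type*} (I : Finset ι) {a b : ι → ℝ}
    (hb : ∀ j ∈ I, 0 ≤ b j) (hB : 0 < ∑ j ∈ I, b j) (hBA : ∑ j ∈ I, b j ≤ ∑ j ∈ I, a j) :
    ∑ j ∈ I, |a j / ∑ k ∈ I, a k - b j / ∑ k ∈ I, b k|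
      ≤ 2 * (∑ j ∈ I, |a j - b j|) / ∑ k ∈ I, a k := by
  set A := ∑ k ∈ I, a k
  set B := ∑ k ∈ I, b k
  have hA : 0 < A := hB.trans_le hBA
  have hAB : A - B ≤ ∑ j ∈ I, |a j - b j| := by
    rw [← Finset.sum_sub_distrib]
    exact Finset.sum_le_sum fun j _ => le_abs_self _
  have hterm : ∀ j ∈ I, |a j / A - b j / B| ≤ |a j - b j| / A + b j * (1 / B - 1 / A) := by
    intro j hj
    have hBA' : 0 ≤ 1 / B - 1 / A := sub_nonneg.2 (one_div_le_one_div_of_le hB hBA)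
    calc |a j / A - b j / B| = |(a j - b j) / A - b j * (1 / B - 1 / A)| := by ring_nf
      _ ≤ |(a j - b j) / A| + |b j * (1 / B - 1 / A)| := abs_sub _ _
      _ = _ := by rw [abs_div, abs_of_pos hA, abs_of_nonneg (mul_nonneg (hb j hj) hBA')]
  calc ∑ j ∈ I, |a j / A - b j / B|
      ≤ ∑ j ∈ I, (|a j - b j| / A + b j * (1 / B - 1 / A)) := Finset.sum_le_sum hterm
    _ = (∑ j ∈ I, |a j - b j|) / A + (A - B) / A := by
      rw [Finset.sum_add_distrib, ← Finset.sum_div, ← Finset.sum_mul]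
      field_simp
      ring
    _ ≤ 2 * (∑ j ∈ I, |a j - b j|) / A := by
      rw [← add_div, two_mul]
      gcongr

theorem monotoneOn_Iic_of_le_succ {α : Type*} [Preorder α] {f : ℕ → α} {n : ℕ}
    (hf : ∀ k < n, f k ≤ f (k + 1)) : MonotoneOn f (Set.Iic n) := by
  intro i _ j hj hij
  induction j, hij using Nat.le_induction with
  | base => exact le_rfl
  | succ k hik ih => exact (ih (Nat.le_of_succ_le hj)).trans (hf k hj)

theorem exists_mem_Ioo_of_mem_Ioc {f : ℕ → ℝ} {n : ℕ} {s : ℝ} (hs : s ∈ Set.Ioc (f 0) (f n))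
    (hsf : s ∉ f '' Set.Iic n) : ∃ m < n, s ∈ Set.Ioo (f m) (f (m + 1)) := by
  classical
  have hsn : s < f n := hs.2.lt_of_ne fun h => hsf ⟨n, Set.self_mem_Iic, h.symm⟩
  have hex : ∃ k, s < f k := ⟨n, hsn⟩
  obtain ⟨m, hm⟩ : ∃ m, Nat.find hex = m + 1 :=
    Nat.exists_eq_add_one.2
      (Nat.pos_of_ne_zero fun h => (Nat.find_spec hex).not_ge (h ▸ hs.1.le))
  have hmn : m < n := by
    have := Nat.find_min' hex hsn
    omega
  refine ⟨m, hmn, (not_lt.1 (Nat.find_min hex (by omega))).lt_of_ne ?_, hm ▸ Nat.find_spec hex⟩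
  exact fun h => hsf ⟨m, Set.mem_Iic.2 hmn.le, h⟩

section FlowInterval

variable {f : ℕ → ℝ} {n m : ℕ} {s : ℝ}

theorem lt_apply_of_mem_Ioo (hf : MonotoneOn f (Set.Iic n)) (hm : m < n)
    (hs : s ∈ Set.Ioo (f m) (f (m + 1))) {k : ℕ} (hk : k ≤ n) (hmk : m < k) : s < f k :=
  hs.2.trans_le (hf (by simp; omega) (by simpa) hmk)

theorem le_apply_iff_of_mem_Ioo (hf : MonotoneOn f (Set.Iic n)) (hm : m < n)
    (hs : s ∈ Set.Ioo (f m) (f (m + 1))) {k : ℕ} (hk : k ≤ n) : s ≤ f k ↔ m < k := by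
  refine ⟨fun hsk => ?_, fun hmk => (lt_apply_of_mem_Ioo hf hm hs hk hmk).le⟩
  by_contra! hkm
  exact (hsk.trans (hf (by simpa) (by simp; omega) hkm)).not_gt hs.1

theorem sum_indicator_Iic_eq_sum_Icc (hf : MonotoneOn f (Set.Iic n)) (hm : m < n)
    (hs : s ∈ Set.Ioo (f m) (f (m + 1))) (g : ℕ → ℝ → ℝ) :
    ∑ i ∈ Finset.Icc 1 n, (Set.Iic (f i)).indicator (g i) s
      = ∑ i ∈ Finset.Icc (m + 1) n, g i s := by
  have hfilter : Finset.Icc (m + 1) n = (Finset.Icc 1 n).filter fun i => s ≤ f i := by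
    ext i
    simp only [Finset.mem_Icc, Finset.mem_filter]
    constructor
    · rintro ⟨hi, hin⟩
      exact ⟨⟨by omega, hin⟩, (le_apply_iff_of_mem_Ioo hf hm hs hin).2 hi⟩
    · rintro ⟨⟨-, hin⟩, hsi⟩
      exact ⟨(le_apply_iff_of_mem_Ioo hf hm hs hin).1 hsi, hin⟩
  simp only [Set.indicator_apply, Set.mem_Iic]
  rw [hfilter, Finset.sum_filter]

end FlowInterval

namespace PDMP

/-- The normalization of weights on `{1,…,q}`, or `p` if their sum is not positive: both
branches of `Psi` have this form. -/
def normalizeOr (q : ℕ) (a p : ℕ → ℝ) : ℕ → ℝ :=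
  if 0 < ∑ k ∈ Finset.Icc 1 q, a k then fun j => a j / ∑ k ∈ Finset.Icc 1 q, a k else p

section Normalize

variable {q : ℕ} {a b p p' : ℕ → ℝ}

theorem normalizeOr_of_pos (h : 0 < ∑ k ∈ Finset.Icc 1 q, a k) :
    normalizeOr q a p = fun j => a j / ∑ k ∈ Finset.Icc 1 q, a k :=
  if_pos h

theorem mem1_div_sum (ha : ∀ j ∈ Finset.Icc 1 q, 0 ≤ a j)
    (h : 0 < ∑ k ∈ Finset.Icc 1 q, a k) :
    mem1 q fun j => a j / ∑ k ∈ Finset.Icc 1 q, a k :=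
  ⟨fun j hj => div_nonneg (ha j hj) h.le, by rw [← Finset.sum_div, div_self h.ne']⟩

theorem mem1_normalizeOr (ha : ∀ j ∈ Finset.Icc 1 q, 0 ≤ a j) (hp : mem1 q p) :
    mem1 q (normalizeOr q a p) := by
  unfold normalizeOr
  split_ifs with h
  · exact mem1_div_sum ha h
  · exact hp

theorem measurable_normalizeOr {α : Type*} [MeasurableSpace α] {a : α → ℕ → ℝ}
    (ha : ∀ j, Measurable fun x => a x j) : Measurable fun x => normalizeOr q (a x) p := by
  have hsum : Measurable fun x => ∑ k ∈ Finset.Icc 1 q, a x k :=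
    Finset.measurable_sum _ fun k _ => ha k
  exact Measurable.ite (measurableSet_lt measurable_const hsum)
    (measurable_pi_lambda _ fun j => (ha j).div hsum) measurable_const

variable {v : (ℕ → ℝ) → ℝ} {Cv lv : ℝ}

/-- Multiplying by the total mass compensates for the normalization failing to be Lipschitz
near zero weights. -/
theorem abs_mul_sum_sub_mul_sum_le (ha : ∀ j ∈ Finset.Icc 1 q, 0 ≤ a j)
    (hb : ∀ j ∈ Finset.Icc 1 q, 0 ≤ b j) (hp : mem1 q p) (hp' : mem1 q p') (hlv : 0 ≤ lv)
    (hv_bd : ∀ r, mem1 q r → |v r| ≤ Cv)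
    (hv_lip : ∀ r r', mem1 q r → mem1 q r' → |v r - v r'| ≤ lv * l1 q r r') :
    |v (normalizeOr q a p) * ∑ j ∈ Finset.Icc 1 q, a j
        - v (normalizeOr q b p') * ∑ j ∈ Finset.Icc 1 q, b j|
      ≤ (Cv + 2 * lv) * ∑ j ∈ Finset.Icc 1 q, |a j - b j| := by
  wlog hBA : ∑ j ∈ Finset.Icc 1 q, b j ≤ ∑ j ∈ Finset.Icc 1 q, a j generalizing a b p p'
  · rw [abs_sub_comm]
    simp_rw [abs_sub_comm (a _)]
    exact this hb ha hp' hp (le_of_not_ge hBA)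
  set A := ∑ j ∈ Finset.Icc 1 q, a j
  set B := ∑ j ∈ Finset.Icc 1 q, b j
  set S := ∑ j ∈ Finset.Icc 1 q, |a j - b j|
  have hS : 0 ≤ S := Finset.sum_nonneg fun j _ => abs_nonneg _
  have hAB : A - B ≤ S := by
    rw [← Finset.sum_sub_distrib]
    exact Finset.sum_le_sum fun j _ => le_abs_self _
  have hva := hv_bd _ (mem1_normalizeOr ha hp)
  have hvb := hv_bd _ (mem1_normalizeOr hb hp')
  rcases (Finset.sum_nonneg hb : 0 ≤ B).eq_or_lt with hB | hB
  · rw [show B = 0 from hB.symm, mul_zero, sub_zero, abs_mul, abs_of_nonneg (hB.le.trans hBA)]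
    calc |v (normalizeOr q a p)| * A ≤ |v (normalizeOr q a p)| * S := by
          gcongr; linarith
      _ ≤ Cv * S := by gcongr
      _ ≤ (Cv + 2 * lv) * S := by nlinarith
  · have hA : 0 < A := hB.trans_le hBA
    have hlip : |v (normalizeOr q a p) - v (normalizeOr q b p')| * A ≤ 2 * lv * S := by
      calc |v (normalizeOr q a p) - v (normalizeOr q b p')| * A
          ≤ lv * (2 * S / A) * A := by
            gcongr
            refine (hv_lip _ _ (mem1_normalizeOr ha hp) (mem1_normalizeOr hb hp')).trans ?_
            rw [normalizeOr_of_pos hA, normalizeOr_of_pos hB]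
            exact mul_le_mul_of_nonneg_left
              (sum_abs_div_sum_sub_div_sum_le _ hb hB hBA) hlv
        _ = 2 * lv * S := by field_simp
    calc |v (normalizeOr q a p) * A - v (normalizeOr q b p') * B|
        = |(v (normalizeOr q a p) - v (normalizeOr q b p')) * A
            + v (normalizeOr q b p') * (A - B)| := by ring_nf
      _ ≤ |v (normalizeOr q a p) - v (normalizeOr q b p')| * A
            + |v (normalizeOr q b p')| * S := by
          refine (abs_add_le _ _).trans ?_
          rw [abs_mul, abs_mul, abs_of_pos hA, abs_of_nonneg (by linarith : 0 ≤ A - B)]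
          gcongr
      _ ≤ (Cv + 2 * lv) * S := by nlinarith

end Normalize

/-- `λ_i(s) e^{-Λ_i(s)}`, the density of the first jump time from `x_i`. -/
def jumpDensity (lam : ℕ → ℝ → ℝ) (i : ℕ) (s : ℝ) : ℝ := lam i s * Real.exp (-(Lam lam i s))

def obsDensity (q d : ℕ) (Q : ℕ → ℕ → ℝ → ℝ) (fW : (Fin d → ℝ) → ℝ) (phi : ℕ → Fin d → ℝ)
    (i : ℕ) (s : ℝ) (y : Fin d → ℝ) : ℝ :=
  ∑ j ∈ Finset.Icc 1 q, Q i j s * fW (y - phi j)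

theorem psiBar_eq_sum {q d : ℕ} {ts : ℕ → ℝ} {lam : ℕ → ℝ → ℝ} {Q : ℕ → ℕ → ℝ → ℝ}
    {fW : (Fin d → ℝ) → ℝ} {phi : ℕ → Fin d → ℝ} (m : ℕ) (r : ℕ → ℝ) (y : Fin d → ℝ) (s : ℝ) :
    psiBar q d ts lam Q fW phi m r y s
      = ∑ i ∈ Finset.Icc (m + 1) q, r i * jumpDensity lam i s * obsDensity q d Q fW phi i s y := by
  unfold psiBar psiNum obsDensity jumpDensity
  rw [Finset.sum_comm]
  simp_rw [Finset.mul_sum]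
  exact Finset.sum_congr rfl fun i _ => Finset.sum_congr rfl fun j _ => by ring

def postJumpValue (q d : ℕ) (ts : ℕ → ℝ) (lam : ℕ → ℝ → ℝ) (Q : ℕ → ℕ → ℝ → ℝ)
    (fW : (Fin d → ℝ) → ℝ) (phi : ℕ → Fin d → ℝ) (v : (ℕ → ℝ) → ℝ)
    (p : ℕ → ℝ) (i : ℕ) (s : ℝ) : ℝ :=
  ∫ y, v (Psi q d ts lam Q fW phi p y s) * obsDensity q d Q fW phi i s y

def jumpValueDensity (q d : ℕ) (ts : ℕ → ℝ) (lam : ℕ → ℝ → ℝ) (Q : ℕ → ℕ → ℝ → ℝ)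
    (fW : (Fin d → ℝ) → ℝ) (phi : ℕ → Fin d → ℝ) (v : (ℕ → ℝ) → ℝ)
    (p : ℕ → ℝ) (s : ℝ) : ℝ :=
  ∑ i ∈ Finset.Icc 1 q, (Set.Iic (ts i)).indicator
    (fun s => p i * (jumpDensity lam i s * postJumpValue q d ts lam Q fW phi v p i s)) s

/-- The hypotheses of the model, except that the rates are bounded on all of `ℝ`, which makes
every `Lam lam i` continuous; truncating `lam` to `[0, ∞)` does not change `Iop`. -/
structure ModelAssumptions (q d : ℕ) (ts : ℕ → ℝ) (Clam : ℝ) (lam : ℕ → ℝ → ℝ)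
    (Q : ℕ → ℕ → ℝ → ℝ) (fW : (Fin d → ℝ) → ℝ) : Prop where
  ts_zero : ts 0 = 0
  ts_mono : MonotoneOn ts (Set.Iic q)
  lam_meas : ∀ i, Measurable (lam i)
  lam_mem : ∀ i s, lam i s ∈ Set.Icc 0 Clam
  Q_meas : ∀ i j, Measurable (Q i j)
  Q_mem : ∀ i j s, 0 ≤ s → Q i j s ∈ Set.Icc (0:ℝ) 1
  Q_sum : ∀ i s, 0 ≤ s → ∑ j ∈ Finset.Icc 1 q, Q i j s = 1
  fW_meas : Measurable fW
  fW_nonneg : ∀ y, 0 ≤ fW y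
  fW_integral : ∫ y, fW y = 1

namespace ModelAssumptions

variable {q d : ℕ} {ts : ℕ → ℝ} {Clam : ℝ} {lam : ℕ → ℝ → ℝ} {Q : ℕ → ℕ → ℝ → ℝ}
  {fW : (Fin d → ℝ) → ℝ} {phi : ℕ → Fin d → ℝ} {v : (ℕ → ℝ) → ℝ} {Cv lv : ℝ}
  {p p' : ℕ → ℝ}

theorem ts_nonneg (hM : ModelAssumptions q d ts Clam lam Q fW) {i : ℕ} (hi : i ≤ q) :
    0 ≤ ts i :=
  hM.ts_zero ▸ hM.ts_mono (Set.mem_Iic.2 (Nat.zero_le q)) (Set.mem_Iic.2 hi) (Nat.zero_le i)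

theorem norm_lam_le (hM : ModelAssumptions q d ts Clam lam Q fW) (i : ℕ) (s : ℝ) :
    ‖lam i s‖ ≤ Clam :=
  (Real.norm_of_nonneg (hM.lam_mem i s).1).trans_le (hM.lam_mem i s).2

theorem continuous_Lam (hM : ModelAssumptions q d ts Clam lam Q fW) (i : ℕ) :
    Continuous (Lam lam i) :=
  intervalIntegral.continuous_primitive
    (fun _ _ => intervalIntegrable_of_norm_le (hM.lam_meas i) fun s _ => hM.norm_lam_le i s) 0

theorem measurable_jumpDensity (hM : ModelAssumptions q d ts Clam lam Q fW) (i : ℕ) :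
    Measurable (jumpDensity lam i) :=
  (hM.lam_meas i).mul (hM.continuous_Lam i).neg.rexp.measurable

theorem jumpDensity_mem_Icc (hM : ModelAssumptions q d ts Clam lam Q fW) (i : ℕ) {s : ℝ}
    (hs : 0 ≤ s) : jumpDensity lam i s ∈ Set.Icc 0 Clam := by
  have hLam : 0 ≤ Lam lam i s :=
    intervalIntegral.integral_nonneg hs fun r _ => (hM.lam_mem i r).1
  refine ⟨mul_nonneg (hM.lam_mem i s).1 (Real.exp_nonneg _), ?_⟩
  calc jumpDensity lam i s ≤ Clam * 1 :=
        mul_le_mul (hM.lam_mem i s).2 (Real.exp_le_one_iff.2 (neg_nonpos.2 hLam))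
          (Real.exp_nonneg _) ((hM.lam_mem i s).1.trans (hM.lam_mem i s).2)
    _ = Clam := mul_one _

theorem intervalIntegral_jumpDensity_le_one (hM : ModelAssumptions q d ts Clam lam Q fW)
    (i : ℕ) {t : ℝ} (ht : 0 ≤ t) : ∫ s in (0:ℝ)..t, jumpDensity lam i s ≤ 1 :=
  integral_mul_exp_neg_integral_le_one ht
    (intervalIntegrable_of_norm_le (hM.lam_meas i) fun s _ => hM.norm_lam_le i s)
    fun s _ => (hM.lam_mem i s).1

theorem integrable_fW (hM : ModelAssumptions q d ts Clam lam Q fW) : Integrable fW :=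
  .of_integral_ne_zero (hM.fW_integral ▸ one_ne_zero)

theorem obsDensity_nonneg (hM : ModelAssumptions q d ts Clam lam Q fW) (i : ℕ) {s : ℝ}
    (hs : 0 ≤ s) (y : Fin d → ℝ) : 0 ≤ obsDensity q d Q fW phi i s y :=
  Finset.sum_nonneg fun j _ => mul_nonneg (hM.Q_mem i j s hs).1 (hM.fW_nonneg _)

theorem integrable_obsDensity (hM : ModelAssumptions q d ts Clam lam Q fW) (i : ℕ) (s : ℝ) :
    Integrable (obsDensity q d Q fW phi i s) :=
  integrable_finsetSum _ fun j _ => (hM.integrable_fW.comp_sub_right (phi j)).const_mul _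

theorem integral_obsDensity (hM : ModelAssumptions q d ts Clam lam Q fW) (i : ℕ) {s : ℝ}
    (hs : 0 ≤ s) : ∫ y, obsDensity q d Q fW phi i s y = 1 := by
  unfold obsDensity
  rw [integral_finsetSum _ fun j _ => (hM.integrable_fW.comp_sub_right (phi j)).const_mul _]
  simp_rw [integral_const_mul, integral_sub_right_eq_self, hM.fW_integral, mul_one]
  exact hM.Q_sum i s hs

theorem measurable_obsDensity (hM : ModelAssumptions q d ts Clam lam Q fW) (i : ℕ) :
    Measurable fun z : ℝ × (Fin d → ℝ) => obsDensity q d Q fW phi i z.1 z.2 :=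
  Finset.measurable_sum _ fun j _ =>
    ((hM.Q_meas i j).comp measurable_fst).mul (hM.fW_meas.comp (measurable_snd.sub_const _))

theorem psiNum_nonneg (hM : ModelAssumptions q d ts Clam lam Q fW) (hp : mem1 q p) {s : ℝ}
    (hs : 0 ≤ s) (m : ℕ) (y : Fin d → ℝ) (j : ℕ) :
    0 ≤ psiNum q d ts lam Q fW phi m p y s j := by
  refine Finset.sum_nonneg fun i hi => ?_
  have hpi := hp.1 i (Finset.mem_Icc.2
    ⟨by linarith [(Finset.mem_Icc.1 hi).1], (Finset.mem_Icc.1 hi).2⟩)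
  have := (hM.lam_mem i s).1
  have := (hM.Q_mem i j s hs).1
  have := hM.fW_nonneg (y - phi j)
  positivity

theorem abs_psiNum_sub_le (hM : ModelAssumptions q d ts Clam lam Q fW) {s : ℝ} (hs : 0 ≤ s)
    (m : ℕ) (p p' : ℕ → ℝ) (y : Fin d → ℝ) (j : ℕ) :
    |psiNum q d ts lam Q fW phi m p y s j - psiNum q d ts lam Q fW phi m p' y s j|
      ≤ psiNum q d ts lam Q fW phi m (fun i => |p i - p' i|) y s j := by
  unfold psiNum
  rw [← Finset.sum_sub_distrib]
  refine (Finset.abs_sum_le_sum_abs _ _).trans (Finset.sum_le_sum fun i _ => ?_)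
  rw [← sub_mul, ← sub_mul, ← sub_mul, ← sub_mul, abs_mul, abs_mul, abs_mul, abs_mul,
    abs_of_nonneg (hM.lam_mem i s).1, abs_of_nonneg (Real.exp_nonneg _),
    abs_of_nonneg (hM.Q_mem i j s hs).1, abs_of_nonneg (hM.fW_nonneg _)]

theorem integrable_psiBar (hM : ModelAssumptions q d ts Clam lam Q fW) (m : ℕ) (r : ℕ → ℝ)
    (s : ℝ) : Integrable fun y => psiBar q d ts lam Q fW phi m r y s := by
  simp_rw [psiBar_eq_sum]
  exact integrable_finsetSum _ fun i _ => (hM.integrable_obsDensity i s).const_mul _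

theorem integral_psiBar (hM : ModelAssumptions q d ts Clam lam Q fW) (m : ℕ) (r : ℕ → ℝ)
    {s : ℝ} (hs : 0 ≤ s) :
    ∫ y, psiBar q d ts lam Q fW phi m r y s
      = ∑ i ∈ Finset.Icc (m + 1) q, r i * jumpDensity lam i s := by
  simp_rw [psiBar_eq_sum]
  rw [integral_finsetSum _ fun i _ => (hM.integrable_obsDensity i s).const_mul _]
  simp_rw [integral_const_mul, hM.integral_obsDensity _ hs, mul_one]

theorem measurable_psiNum (hM : ModelAssumptions q d ts Clam lam Q fW) (m : ℕ) (p : ℕ → ℝ)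
    (j : ℕ) :
    Measurable fun z : ℝ × (Fin d → ℝ) => psiNum q d ts lam Q fW phi m p z.2 z.1 j := by
  refine Finset.measurable_sum _ fun i _ => ?_
  have := hM.lam_meas i
  have := (hM.continuous_Lam i).measurable
  have := hM.Q_meas i j
  have := hM.fW_meas
  fun_prop

theorem mem1_Psi (hM : ModelAssumptions q d ts Clam lam Q fW) (hp : mem1 q p) (y : Fin d → ℝ)
    (s : ℝ) : mem1 q (Psi q d ts lam Q fW phi p y s) := by
  simp only [Psi]
  split_ifs with hjump hpos hflow hpos'
  · have hm := Nat.sInf_mem hjump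
    exact mem1_div_sum (fun j _ =>
      mul_nonneg (hM.Q_mem _ j _ (hM.ts_nonneg hm.2.1)).1 (hM.fW_nonneg _)) hpos
  · exact hp
  · have hm := Nat.sInf_mem hflow
    exact mem1_div_sum (fun j _ =>
      hM.psiNum_nonneg hp ((hM.ts_nonneg hm.1.le).trans hm.2.1.le) _ y j) hpos'
  all_goals exact hp

theorem measurable_Psi (hM : ModelAssumptions q d ts Clam lam Q fW) (p : ℕ → ℝ) (s : ℝ) :
    Measurable fun y => Psi q d ts lam Q fW phi p y s := by
  unfold Psi
  split_ifs
  · exact measurable_normalizeOr fun j =>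
      (hM.fW_meas.comp (measurable_id.sub_const _)).const_mul _
  · exact measurable_normalizeOr fun j => Finset.measurable_sum _ fun i _ =>
      (hM.fW_meas.comp (measurable_id.sub_const _)).const_mul _
  · exact measurable_const

theorem Psi_eq_normalizeOr_of_mem_Ioo (hM : ModelAssumptions q d ts Clam lam Q fW) {m : ℕ}
    (hm : m < q) {s : ℝ} (hs : s ∈ Set.Ioo (ts m) (ts (m + 1))) (p : ℕ → ℝ) (y : Fin d → ℝ) :
    Psi q d ts lam Q fW phi p y s = normalizeOr q (psiNum q d ts lam Q fW phi m p y s) p := by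
  have hle := fun {k} (hk : k ≤ q) => le_apply_iff_of_mem_Ioo hM.ts_mono hm hs hk
  have hjump : ¬ ∃ k, 1 ≤ k ∧ k ≤ q ∧ s = ts k := by
    rintro ⟨k, -, hk, rfl⟩
    exact (lt_apply_of_mem_Ioo hM.ts_mono hm hs hk ((hle hk).1 le_rfl)).false
  have hflow : {k | k < q ∧ ts k < s ∧ s < ts (k + 1)} = {m} := by
    ext k
    refine ⟨fun ⟨hk, hks, hsk⟩ => ?_, fun hk => hk ▸ ⟨hm, hs.1, hs.2⟩⟩
    have := (hle hk.le).not.1 hks.not_ge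
    have := (hle (Nat.succ_le_of_lt hk)).1 hsk.le
    exact Set.mem_singleton_iff.2 (by omega)
  simp only [Psi, if_neg hjump, hflow, csInf_singleton]
  rw [if_pos ⟨m, hm, hs.1, hs.2⟩]
  rfl

theorem integrable_mul_obsDensity (hM : ModelAssumptions q d ts Clam lam Q fW)
    (hv_meas : Measurable v) (hv_bd : ∀ r, mem1 q r → |v r| ≤ Cv) (hp : mem1 q p)
    (i : ℕ) (s : ℝ) :
    Integrable fun y => v (Psi q d ts lam Q fW phi p y s) * obsDensity q d Q fW phi i s y :=
  (hM.integrable_obsDensity i s).bdd_mul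
    (hv_meas.comp (hM.measurable_Psi p s)).aestronglyMeasurable
    (ae_of_all _ fun y => hv_bd _ (hM.mem1_Psi hp y s))

theorem integrable_mul_psiBar (hM : ModelAssumptions q d ts Clam lam Q fW)
    (hv_meas : Measurable v) (hv_bd : ∀ r, mem1 q r → |v r| ≤ Cv) (hp : mem1 q p)
    (m : ℕ) (s : ℝ) :
    Integrable fun y =>
      v (Psi q d ts lam Q fW phi p y s) * psiBar q d ts lam Q fW phi m p y s :=
  (hM.integrable_psiBar m p s).bdd_mul
    (hv_meas.comp (hM.measurable_Psi p s)).aestronglyMeasurable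
    (ae_of_all _ fun y => hv_bd _ (hM.mem1_Psi hp y s))

theorem abs_postJumpValue_le (hM : ModelAssumptions q d ts Clam lam Q fW)
    (hv_bd : ∀ r, mem1 q r → |v r| ≤ Cv) (hp : mem1 q p) (i : ℕ) {s : ℝ} (hs : 0 ≤ s) :
    |postJumpValue q d ts lam Q fW phi v p i s| ≤ Cv := by
  rw [← Real.norm_eq_abs, postJumpValue]
  calc _ ≤ ∫ y, Cv * obsDensity q d Q fW phi i s y :=
        norm_integral_le_of_norm_le ((hM.integrable_obsDensity i s).const_mul Cv)
          (ae_of_all _ fun y => by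
            rw [norm_mul, Real.norm_of_nonneg (hM.obsDensity_nonneg i hs y)]
            exact mul_le_mul_of_nonneg_right (hv_bd _ (hM.mem1_Psi hp y s))
              (hM.obsDensity_nonneg i hs y))
    _ = Cv := by rw [integral_const_mul, hM.integral_obsDensity i hs, mul_one]

theorem abs_jumpDensity_mul_postJumpValue_le (hM : ModelAssumptions q d ts Clam lam Q fW)
    (hv_bd : ∀ r, mem1 q r → |v r| ≤ Cv) (hp : mem1 q p) (i : ℕ) {s : ℝ} (hs : 0 ≤ s) :
    |jumpDensity lam i s * postJumpValue q d ts lam Q fW phi v p i s| ≤ Clam * Cv := by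
  have hc := hM.jumpDensity_mem_Icc i hs
  rw [abs_mul, abs_of_nonneg hc.1]
  exact mul_le_mul hc.2 (hM.abs_postJumpValue_le hv_bd hp i hs) (abs_nonneg _) (hc.1.trans hc.2)

theorem intervalIntegrable_jumpDensity_mul_postJumpValue
    (hM : ModelAssumptions q d ts Clam lam Q fW) (hv_meas : Measurable v)
    (hv_bd : ∀ r, mem1 q r → |v r| ≤ Cv) (hp : mem1 q p) (i : ℕ) {k : ℕ} (hk : k ≤ q) :
    IntervalIntegrable
      (fun s => jumpDensity lam i s * postJumpValue q d ts lam Q fW phi v p i s)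
      volume 0 (ts k) := by
  rw [← hM.ts_zero]
  refine IntervalIntegrable.trans_iterate fun m hm => ?_
  have hmq : m < q := by omega
  rw [intervalIntegrable_iff_integrableOn_Ioo_of_le
    (hM.ts_mono (Set.mem_Iic.2 hmq.le) (Set.mem_Iic.2 hmq) m.le_succ)]
  -- `Psi` is not known to be measurable in `s`, but on a flow interval it agrees with
  -- `normalizeOr` of `psiNum`, which is.
  have hflow : Measurable fun s => jumpDensity lam i s * ∫ y,
      v (normalizeOr q (psiNum q d ts lam Q fW phi m p y s) p) * obsDensity q d Q fW phi i s y :=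
    (hM.measurable_jumpDensity i).mul ((hv_meas.comp (measurable_normalizeOr fun j =>
      hM.measurable_psiNum m p j)).mul
        (hM.measurable_obsDensity i)).stronglyMeasurable.integral_prod_right'.measurable
  have heq : Set.EqOn (fun s => jumpDensity lam i s * ∫ y,
        v (normalizeOr q (psiNum q d ts lam Q fW phi m p y s) p) * obsDensity q d Q fW phi i s y)
      (fun s => jumpDensity lam i s * postJumpValue q d ts lam Q fW phi v p i s)
      (Set.Ioo (ts m) (ts (m + 1))) := fun s hs => by
    simp only [postJumpValue, hM.Psi_eq_normalizeOr_of_mem_Ioo hmq hs]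
  refine (Measure.integrableOn_of_bounded measure_Ioo_lt_top.ne hflow.aestronglyMeasurable
    (M := Clam * Cv) ?_).congr_fun heq measurableSet_Ioo
  refine (ae_restrict_iff' measurableSet_Ioo).2 (ae_of_all _ fun s hs => ?_)
  have h := heq hs
  dsimp only at h
  rw [h, Real.norm_eq_abs]
  exact hM.abs_jumpDensity_mul_postJumpValue_le hv_bd hp i ((hM.ts_nonneg hmq.le).trans hs.1.le)

theorem sum_mul_postJumpValue_eq_integral (hM : ModelAssumptions q d ts Clam lam Q fW)
    (hv_meas : Measurable v) (hv_bd : ∀ r, mem1 q r → |v r| ≤ Cv) (hp : mem1 q p)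
    (m : ℕ) (s : ℝ) :
    ∑ i ∈ Finset.Icc (m + 1) q,
        p i * (jumpDensity lam i s * postJumpValue q d ts lam Q fW phi v p i s)
      = ∫ y, v (Psi q d ts lam Q fW phi p y s) * psiBar q d ts lam Q fW phi m p y s := by
  have hint := hM.integrable_mul_obsDensity (phi := phi) hv_meas hv_bd hp
  calc ∑ i ∈ Finset.Icc (m + 1) q,
        p i * (jumpDensity lam i s * postJumpValue q d ts lam Q fW phi v p i s)
      = ∑ i ∈ Finset.Icc (m + 1) q, ∫ y, p i * jumpDensity lam i s *
          (v (Psi q d ts lam Q fW phi p y s) * obsDensity q d Q fW phi i s y) := by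
        simp_rw [integral_const_mul, postJumpValue, mul_assoc]
    _ = ∫ y, v (Psi q d ts lam Q fW phi p y s) * psiBar q d ts lam Q fW phi m p y s := by
        rw [← integral_finsetSum _ fun i _ => (hint i s).const_mul _]
        simp_rw [psiBar_eq_sum, Finset.mul_sum]
        exact integral_congr_ae (ae_of_all _ fun y =>
          Finset.sum_congr rfl fun i _ => by ring)

theorem jumpValueDensity_eq_integral_of_mem_Ioo (hM : ModelAssumptions q d ts Clam lam Q fW)
    (hv_meas : Measurable v) (hv_bd : ∀ r, mem1 q r → |v r| ≤ Cv) (hp : mem1 q p)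
    {m : ℕ} (hm : m < q) {s : ℝ} (hs : s ∈ Set.Ioo (ts m) (ts (m + 1))) :
    jumpValueDensity q d ts lam Q fW phi v p s
      = ∫ y, v (Psi q d ts lam Q fW phi p y s) * psiBar q d ts lam Q fW phi m p y s := by
  rw [jumpValueDensity, sum_indicator_Iic_eq_sum_Icc hM.ts_mono hm hs]
  exact hM.sum_mul_postJumpValue_eq_integral hv_meas hv_bd hp m s

theorem jumpValueDensity_eq_zero_of_lt (hM : ModelAssumptions q d ts Clam lam Q fW)
    (p : ℕ → ℝ) {s : ℝ} (hs : ts q < s) : jumpValueDensity q d ts lam Q fW phi v p s = 0 :=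
  Finset.sum_eq_zero fun _ hi => Set.indicator_of_notMem (fun hsi => (Set.mem_Iic.1 hsi).not_gt
    (lt_of_le_of_lt (hM.ts_mono (Set.mem_Iic.2 (Finset.mem_Icc.1 hi).2) Set.self_mem_Iic
      (Finset.mem_Icc.1 hi).2) hs)) _

theorem abs_jumpValueDensity_le (hM : ModelAssumptions q d ts Clam lam Q fW)
    (hv_bd : ∀ r, mem1 q r → |v r| ≤ Cv) (hp : mem1 q p) {s : ℝ} (hs : 0 ≤ s) :
    |jumpValueDensity q d ts lam Q fW phi v p s| ≤ Clam * Cv := by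
  refine (Finset.abs_sum_le_sum_abs _ _).trans ?_
  calc _ ≤ ∑ i ∈ Finset.Icc 1 q, p i * (Clam * Cv) := Finset.sum_le_sum fun i hi => by
        rw [← Real.norm_eq_abs]
        refine le_trans (norm_indicator_le_norm_self _ _) ?_
        rw [Real.norm_eq_abs, abs_mul, abs_of_nonneg (hp.1 i hi)]
        exact mul_le_mul_of_nonneg_left (hM.abs_jumpDensity_mul_postJumpValue_le hv_bd hp i hs)
          (hp.1 i hi)
    _ = Clam * Cv := by rw [← Finset.sum_mul, hp.2, one_mul]

theorem abs_jumpValueDensity_sub_le_of_mem_Ioo (hM : ModelAssumptions q d ts Clam lam Q fW)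
    (hv_meas : Measurable v) (hlv : 0 ≤ lv) (hv_bd : ∀ r, mem1 q r → |v r| ≤ Cv)
    (hv_lip : ∀ r r', mem1 q r → mem1 q r' → |v r - v r'| ≤ lv * l1 q r r')
    (hp : mem1 q p) (hp' : mem1 q p') {m : ℕ} (hm : m < q) {s : ℝ}
    (hs : s ∈ Set.Ioo (ts m) (ts (m + 1))) :
    |jumpValueDensity q d ts lam Q fW phi v p s - jumpValueDensity q d ts lam Q fW phi v p' s|
      ≤ (Cv + 2 * lv) * ∑ i ∈ Finset.Icc (m + 1) q, |p i - p' i| * jumpDensity lam i s := by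
  have hs0 : 0 ≤ s := (hM.ts_nonneg hm.le).trans hs.1.le
  have hCv : 0 ≤ Cv := (abs_nonneg _).trans (hv_bd p hp)
  rw [hM.jumpValueDensity_eq_integral_of_mem_Ioo hv_meas hv_bd hp hm hs,
    hM.jumpValueDensity_eq_integral_of_mem_Ioo hv_meas hv_bd hp' hm hs,
    ← integral_sub (hM.integrable_mul_psiBar hv_meas hv_bd hp m s)
      (hM.integrable_mul_psiBar hv_meas hv_bd hp' m s),
    ← hM.integral_psiBar (phi := phi) m _ hs0, ← integral_const_mul, ← Real.norm_eq_abs]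
  refine norm_integral_le_of_norm_le ((hM.integrable_psiBar m _ s).const_mul _)
    (ae_of_all _ fun y => ?_)
  simp only [hM.Psi_eq_normalizeOr_of_mem_Ioo hm hs, Real.norm_eq_abs]
  refine (abs_mul_sum_sub_mul_sum_le (fun j _ => hM.psiNum_nonneg hp hs0 m y j)
    (fun j _ => hM.psiNum_nonneg hp' hs0 m y j) hp hp' hlv hv_bd hv_lip).trans ?_
  exact mul_le_mul_of_nonneg_left
    (Finset.sum_le_sum fun j _ => hM.abs_psiNum_sub_le hs0 m p p' y j) (by positivity)

theorem ae_abs_jumpValueDensity_sub_le (hM : ModelAssumptions q d ts Clam lam Q fW)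
    (hv_meas : Measurable v) (hlv : 0 ≤ lv) (hv_bd : ∀ r, mem1 q r → |v r| ≤ Cv)
    (hv_lip : ∀ r r', mem1 q r → mem1 q r' → |v r - v r'| ≤ lv * l1 q r r')
    (hp : mem1 q p) (hp' : mem1 q p') :
    ∀ᵐ s, 0 < s →
      |jumpValueDensity q d ts lam Q fW phi v p s - jumpValueDensity q d ts lam Q fW phi v p' s|
        ≤ (Cv + 2 * lv) * ∑ i ∈ Finset.Icc 1 q, |p i - p' i| * jumpDensity lam i s := by
  have hCv : 0 ≤ Cv := (abs_nonneg _).trans (hv_bd p hp)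
  filter_upwards [((Set.finite_Iic q).image ts).countable.ae_notMem volume] with s hjump hs
  have hterm : ∀ i ∈ Finset.Icc 1 q, 0 ≤ |p i - p' i| * jumpDensity lam i s :=
    fun i _ => mul_nonneg (abs_nonneg _) (hM.jumpDensity_mem_Icc i hs.le).1
  rcases le_or_gt s (ts q) with hsq | hsq
  · obtain ⟨m, hm, hsm⟩ := exists_mem_Ioo_of_mem_Ioc ⟨hM.ts_zero ▸ hs, hsq⟩ hjump
    refine (hM.abs_jumpValueDensity_sub_le_of_mem_Ioo hv_meas hlv hv_bd hv_lip hp hp' hm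
      hsm).trans ?_
    gcongr
    · exact fun i hi _ => hterm i hi
    · omega
  · rw [hM.jumpValueDensity_eq_zero_of_lt p hsq, hM.jumpValueDensity_eq_zero_of_lt p' hsq,
      sub_zero, abs_zero]
    exact mul_nonneg (by positivity) (Finset.sum_nonneg hterm)

theorem intervalIntegrable_jumpValueDensity_term (hM : ModelAssumptions q d ts Clam lam Q fW)
    (hv_meas : Measurable v) (hv_bd : ∀ r, mem1 q r → |v r| ≤ Cv) (hp : mem1 q p)
    {i : ℕ} (hi : i ≤ q) {u : ℝ} (hu : 0 ≤ u) :
    IntervalIntegrable ((Set.Iic (ts i)).indicator fun s =>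
      p i * (jumpDensity lam i s * postJumpValue q d ts lam Q fW phi v p i s)) volume 0 u := by
  rw [intervalIntegrable_iff_integrableOn_Ioc_of_le hu, IntegrableOn,
    integrable_indicator_iff measurableSet_Iic, IntegrableOn,
    Measure.restrict_restrict measurableSet_Iic, Set.inter_comm, Set.Ioc_inter_Iic]
  exact (((intervalIntegrable_iff_integrableOn_Ioc_of_le (hM.ts_nonneg hi)).1
    (hM.intervalIntegrable_jumpDensity_mul_postJumpValue hv_meas hv_bd hp i hi)).mono_set
      (Set.Ioc_subset_Ioc_right (min_le_right _ _))).const_mul (p i)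

theorem intervalIntegrable_jumpValueDensity (hM : ModelAssumptions q d ts Clam lam Q fW)
    (hv_meas : Measurable v) (hv_bd : ∀ r, mem1 q r → |v r| ≤ Cv) (hp : mem1 q p)
    {u : ℝ} (hu : 0 ≤ u) :
    IntervalIntegrable (jumpValueDensity q d ts lam Q fW phi v p) volume 0 u := by
  have h := IntervalIntegrable.sum (Finset.Icc 1 q) fun i hi =>
    hM.intervalIntegrable_jumpValueDensity_term (phi := phi) hv_meas hv_bd hp
      (Finset.mem_Icc.1 hi).2 hu
  rw [Finset.sum_fn] at h
  exact h

theorem Iop_eq_integral_jumpValueDensity (hM : ModelAssumptions q d ts Clam lam Q fW)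
    (hv_meas : Measurable v) (hv_bd : ∀ r, mem1 q r → |v r| ≤ Cv) (hp : mem1 q p)
    {u : ℝ} (hu : 0 ≤ u) :
    Iop q d ts lam Q fW phi v p u
      = ∫ s in (0:ℝ)..u, jumpValueDensity q d ts lam Q fW phi v p s := by
  simp only [jumpValueDensity]
  rw [intervalIntegral.integral_finsetSum fun i hi =>
    hM.intervalIntegrable_jumpValueDensity_term hv_meas hv_bd hp (Finset.mem_Icc.1 hi).2 hu]
  refine Finset.sum_congr rfl fun i hi => ?_
  rw [intervalIntegral.integral_of_le hu, setIntegral_indicator measurableSet_Iic,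
    Set.Ioc_inter_Iic, ← intervalIntegral.integral_of_le
      (le_min hu (hM.ts_nonneg (Finset.mem_Icc.1 hi).2)), intervalIntegral.integral_const_mul]
  rfl

theorem abs_Iop_sub_Iop_le_mul_abs_sub (hM : ModelAssumptions q d ts Clam lam Q fW)
    (hv_meas : Measurable v) (hv_bd : ∀ r, mem1 q r → |v r| ≤ Cv) (hp : mem1 q p)
    {u u' : ℝ} (hu : 0 ≤ u) (hu' : 0 ≤ u') :
    |Iop q d ts lam Q fW phi v p u - Iop q d ts lam Q fW phi v p u'| ≤ Cv * Clam * |u - u'| := by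
  rw [hM.Iop_eq_integral_jumpValueDensity hv_meas hv_bd hp hu,
    hM.Iop_eq_integral_jumpValueDensity hv_meas hv_bd hp hu',
    intervalIntegral.integral_interval_sub_left
      (hM.intervalIntegrable_jumpValueDensity hv_meas hv_bd hp hu)
      (hM.intervalIntegrable_jumpValueDensity hv_meas hv_bd hp hu'),
    ← Real.norm_eq_abs, mul_comm Cv]
  refine intervalIntegral.norm_integral_le_of_norm_le_const fun s hs => ?_
  have : min u' u < s := (Set.mem_uIoc.1 hs).elim (fun h => (min_le_left _ _).trans_lt h.1)
    (fun h => (min_le_right _ _).trans_lt h.1)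
  exact hM.abs_jumpValueDensity_le hv_bd hp ((le_min hu' hu).trans this.le)

theorem abs_Iop_sub_Iop_le_mul_l1 (hM : ModelAssumptions q d ts Clam lam Q fW)
    (hv_meas : Measurable v) (hlv : 0 ≤ lv) (hv_bd : ∀ r, mem1 q r → |v r| ≤ Cv)
    (hv_lip : ∀ r r', mem1 q r → mem1 q r' → |v r - v r'| ≤ lv * l1 q r r')
    (hp : mem1 q p) (hp' : mem1 q p') {u : ℝ} (hu : 0 ≤ u) :
    |Iop q d ts lam Q fW phi v p u - Iop q d ts lam Q fW phi v p' u|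
      ≤ (Cv + 2 * lv) * l1 q p p' := by
  have hCv : 0 ≤ Cv := (abs_nonneg _).trans (hv_bd p hp)
  have hc := fun i => intervalIntegrable_of_norm_le (a := 0) (b := u)
    (hM.measurable_jumpDensity i) fun s hs => by
      have hc := hM.jumpDensity_mem_Icc i ((le_min le_rfl hu).trans hs.1.le)
      exact (Real.norm_of_nonneg hc.1).trans_le hc.2
  have hbound : IntervalIntegrable (fun s => (Cv + 2 * lv) *
      ∑ i ∈ Finset.Icc 1 q, |p i - p' i| * jumpDensity lam i s) volume 0 u := by
    have h := IntervalIntegrable.sum (Finset.Icc 1 q) fun i _ => (hc i).const_mul |p i - p' i|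
    rw [Finset.sum_fn] at h
    exact h.const_mul _
  rw [hM.Iop_eq_integral_jumpValueDensity hv_meas hv_bd hp hu,
    hM.Iop_eq_integral_jumpValueDensity hv_meas hv_bd hp' hu,
    ← intervalIntegral.integral_sub (hM.intervalIntegrable_jumpValueDensity hv_meas hv_bd hp hu)
      (hM.intervalIntegrable_jumpValueDensity hv_meas hv_bd hp' hu), ← Real.norm_eq_abs]
  calc _ ≤ ∫ s in (0:ℝ)..u,
        (Cv + 2 * lv) * ∑ i ∈ Finset.Icc 1 q, |p i - p' i| * jumpDensity lam i s :=
        intervalIntegral.norm_integral_le_of_norm_le hu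
          ((hM.ae_abs_jumpValueDensity_sub_le hv_meas hlv hv_bd hv_lip hp hp').mono
            fun s h hs => h hs.1) hbound
    _ = (Cv + 2 * lv) *
          ∑ i ∈ Finset.Icc 1 q, |p i - p' i| * ∫ s in (0:ℝ)..u, jumpDensity lam i s := by
        rw [intervalIntegral.integral_const_mul,
          intervalIntegral.integral_finsetSum fun i _ => (hc i).const_mul _]
        simp_rw [intervalIntegral.integral_const_mul]
    _ ≤ (Cv + 2 * lv) * l1 q p p' := by
        rw [l1]
        gcongr with i
        exact mul_le_of_le_one_right (abs_nonneg _) (hM.intervalIntegral_jumpDensity_le_one i hu)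

end ModelAssumptions

section Truncation

variable {q d : ℕ} {ts : ℕ → ℝ} {lam lam' : ℕ → ℝ → ℝ} {Q : ℕ → ℕ → ℝ → ℝ}
  {fW : (Fin d → ℝ) → ℝ} {phi : ℕ → Fin d → ℝ} {v : (ℕ → ℝ) → ℝ}

theorem Lam_congr (h : ∀ i s, 0 ≤ s → lam i s = lam' i s) (i : ℕ) {t : ℝ} (ht : 0 ≤ t) :
    Lam lam i t = Lam lam' i t :=
  intervalIntegral.integral_congr fun s hs => h i s (by rw [Set.uIcc_of_le ht] at hs; exact hs.1)

theorem Psi_congr (h : ∀ i s, 0 ≤ s → lam i s = lam' i s) (p : ℕ → ℝ) (y : Fin d → ℝ)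
    {s : ℝ} (hs : 0 ≤ s) :
    Psi q d ts lam Q fW phi p y s = Psi q d ts lam' Q fW phi p y s := by
  have hnum : ∀ m r, psiNum q d ts lam Q fW phi m r y s = psiNum q d ts lam' Q fW phi m r y s :=
    fun m r => funext fun j => by simp only [psiNum, h _ s hs, Lam_congr h _ hs]
  simp only [Psi, psiBar, hnum]
  -- what is left are the decidability instances of the `if`s, which still mention `lam`
  congr

theorem Iop_congr (h : ∀ i s, 0 ≤ s → lam i s = lam' i s) (hts : ∀ i ≤ q, 0 ≤ ts i)
    (p : ℕ → ℝ) {u : ℝ} (hu : 0 ≤ u) :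
    Iop q d ts lam Q fW phi v p u = Iop q d ts lam' Q fW phi v p u := by
  refine Finset.sum_congr rfl fun i hi =>
    congrArg _ (intervalIntegral.integral_congr fun s hs => ?_)
  rw [Set.uIcc_of_le (le_min hu (hts i (Finset.mem_Icc.1 hi).2))] at hs
  simp only [h i s hs.1, Lam_congr h i hs.1, Psi_congr h p _ hs.1]

end Truncation

theorem Iop_lipschitz_general
    (q d : ℕ)
    (ts : ℕ → ℝ) (hts0 : ts 0 = 0)
    (htsmono : ∀ i, i < q → ts i ≤ ts (i + 1))
    (Clam : ℝ) (hClam : 0 ≤ Clam)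
    (lam : ℕ → ℝ → ℝ) (hlam_meas : ∀ i, Measurable (lam i))
    (hlam_bd : ∀ i s, 0 ≤ s → lam i s ∈ Set.Icc 0 Clam)
    (Q : ℕ → ℕ → ℝ → ℝ) (hQ_meas : ∀ i j, Measurable (Q i j))
    (hQ_bd : ∀ i j s, 0 ≤ s → Q i j s ∈ Set.Icc (0:ℝ) 1)
    (hQ_sum : ∀ i s, 0 ≤ s → ∑ j ∈ Finset.Icc 1 q, Q i j s = 1)
    (fW : (Fin d → ℝ) → ℝ) (hfW_meas : Measurable fW)
    (hfW_nonneg : ∀ y, 0 ≤ fW y) (hfW_int : ∫ y : Fin d → ℝ, fW y = 1)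
    (phi : ℕ → Fin d → ℝ)
    (v : (ℕ → ℝ) → ℝ) (hv_meas : Measurable v)
    (Cv lv : ℝ) (hlv : 0 ≤ lv)
    (hv_bd : ∀ p, mem1 q p → |v p| ≤ Cv)
    (hv_lip : ∀ p p', mem1 q p → mem1 q p' → |v p - v p'| ≤ lv * l1 q p p')
    (p p' : ℕ → ℝ) (hp : mem1 q p) (hp' : mem1 q p')
    (u u' : ℝ) (hu : 0 ≤ u) (hu' : 0 ≤ u') :
    |Iop q d ts lam Q fW phi v p u - Iop q d ts lam Q fW phi v p' u'| ≤
      (Cv + 2 * lv) * l1 q p p' + Cv * Clam * |u - u'| := by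
  set lamPos : ℕ → ℝ → ℝ := fun i => (Set.Ici 0).indicator (lam i)
  have hM : ModelAssumptions q d ts Clam lamPos Q fW :=
    { ts_zero := hts0
      ts_mono := monotoneOn_Iic_of_le_succ htsmono
      lam_meas := fun i => (hlam_meas i).indicator measurableSet_Ici
      lam_mem := fun i s => by
        by_cases hs : 0 ≤ s
        · simpa [lamPos, hs] using hlam_bd i s hs
        · simp [lamPos, hs, hClam]
      Q_meas := hQ_meas
      Q_mem := hQ_bd
      Q_sum := hQ_sum
      fW_meas := hfW_meas
      fW_nonneg := hfW_nonneg
      fW_integral := hfW_int }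
  have hlam : ∀ i s, 0 ≤ s → lam i s = lamPos i s := fun i s hs =>
    (Set.indicator_of_mem (Set.mem_Ici.2 hs) _).symm
  have hts := fun i (hi : i ≤ q) => hM.ts_nonneg hi
  rw [Iop_congr hlam hts p hu, Iop_congr hlam hts p' hu']
  calc _ ≤ |Iop q d ts lamPos Q fW phi v p u - Iop q d ts lamPos Q fW phi v p u'|
        + |Iop q d ts lamPos Q fW phi v p u' - Iop q d ts lamPos Q fW phi v p' u'| :=
        abs_sub_le _ _ _
    _ ≤ Cv * Clam * |u - u'| + (Cv + 2 * lv) * l1 q p p' :=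
        add_le_add (hM.abs_Iop_sub_Iop_le_mul_abs_sub hv_meas hv_bd hp hu hu')
          (hM.abs_Iop_sub_Iop_le_mul_l1 hv_meas hlv hv_bd hv_lip hp hp' hu')
    _ = _ := add_comm _ _

/-- **Proposition C.5 (Lipschitz continuity of `I`).** -/
theorem Iop_lipschitz
    (q d : ℕ) (hq : 1 ≤ q) (hd : 1 ≤ d)
    (ts : ℕ → ℝ) (hts0 : ts 0 = 0) (hts1 : 0 < ts 1)
    (htsmono : ∀ i, i < q → ts i ≤ ts (i + 1))
    (Clam : ℝ) (hClam : 0 ≤ Clam)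
    (lam : ℕ → ℝ → ℝ) (hlam_meas : ∀ i, Measurable (lam i))
    (hlam_bd : ∀ i s, 0 ≤ s → lam i s ∈ Set.Icc 0 Clam)
    (Q : ℕ → ℕ → ℝ → ℝ) (hQ_meas : ∀ i j, Measurable (Q i j))
    (hQ_bd : ∀ i j s, 0 ≤ s → Q i j s ∈ Set.Icc (0:ℝ) 1)
    (hQ_sum : ∀ i s, 0 ≤ s → ∑ j ∈ Finset.Icc 1 q, Q i j s = 1)
    (fW : (Fin d → ℝ) → ℝ) (hfW_meas : Measurable fW)
    (hfW_nonneg : ∀ y, 0 ≤ fW y) (hfW_int : ∫ y : Fin d → ℝ, fW y = 1)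
    (phi : ℕ → Fin d → ℝ)
    (v : (ℕ → ℝ) → ℝ) (hv_meas : Measurable v)
    (Cv lv : ℝ) (hCv : 0 ≤ Cv) (hlv : 0 ≤ lv)
    (hv_bd : ∀ p, mem1 q p → |v p| ≤ Cv)
    (hv_lip : ∀ p p', mem1 q p → mem1 q p' → |v p - v p'| ≤ lv * l1 q p p')
    (p p' : ℕ → ℝ) (hp : mem1 q p) (hp' : mem1 q p')
    (u u' : ℝ) (hu : 0 ≤ u) (hu' : 0 ≤ u') :
    |Iop q d ts lam Q fW phi v p u - Iop q d ts lam Q fW phi v p' u'| ≤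
      (Cv + 2 * lv) * l1 q p p' + Cv * Clam * |u - u'| :=
  Iop_lipschitz_general q d ts hts0 htsmono Clam hClam lam hlam_meas hlam_bd Q hQ_meas hQ_bd hQ_sum
    fW hfW_meas hfW_nonneg hfW_int phi v hv_meas Cv lv hlv hv_bd hv_lip p p' hp hp' u u' hu hu'

end PDMP
end
end

section
/- (Lemma 5.10, time-discretization error of the maximization.) For every m ∈ M and every π ∈ M_1, one has |sup_{u ∈ [t*_m, t*_{m+1})} J(v,g)(π,u) − max_{u ∈ Gr_m(Δ)} J(v,g)(π,u)| ≤ ([g]_2 + C_g C_λ + C_v C_λ) Δ. -/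
open MeasureTheory Finset

noncomputable section

namespace PDMP

private lemma exp_helper {a b : ℝ} (ha : 0 ≤ a) (h : a ≤ b) :
    |Real.exp (-a) - Real.exp (-b)| ≤ |a - b| := by
  rw [abs_of_nonneg (sub_nonneg.2 (Real.exp_le_exp.2 (by linarith))),
    abs_of_nonpos (by linarith)]
  have h1 := Real.add_one_le_exp (a - b)
  have h4 : Real.exp (-b) = Real.exp (-a) * Real.exp (a - b) := by
    rw [← Real.exp_add]; ring_nf
  have h2 : Real.exp (-a) ≤ 1 := Real.exp_le_one_iff.2 (by linarith)
  nlinarith [Real.exp_pos (-a)]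

lemma exp_neg_lip {a b : ℝ} (ha : 0 ≤ a) (hb : 0 ≤ b) :
    |Real.exp (-a) - Real.exp (-b)| ≤ |a - b| := by
  rcases le_total a b with h | h
  · exact exp_helper ha h
  · rw [abs_sub_comm, abs_sub_comm a b]; exact exp_helper hb h

lemma min_lip (a b c : ℝ) : |min a c - min b c| ≤ |a - b| := by
  rcases le_total a c with h | h <;> rcases le_total b c with h' | h'
  · rw [min_eq_left h, min_eq_left h']
  · rw [min_eq_left h, min_eq_right h', abs_of_nonpos (by linarith),
      abs_of_nonpos (by linarith)]; linarith
  · rw [min_eq_right h, min_eq_left h', abs_of_nonneg (by linarith),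
      abs_of_nonneg (by linarith)]; linarith
  · rw [min_eq_right h, min_eq_right h']; simpa using abs_nonneg (a - b)

lemma intInt_of_bdd {f : ℝ → ℝ} {a b C : ℝ}
    (hf : AEStronglyMeasurable f (volume.restrict (Set.uIoc a b)))
    (h : ∀ s ∈ Set.uIoc a b, |f s| ≤ C) : IntervalIntegrable f volume a b := by
  rw [intervalIntegrable_iff]
  haveI : IsFiniteMeasure (volume.restrict (Set.uIoc a b)) :=
    ⟨by rw [Measure.restrict_apply_univ, Set.uIoc]; exact measure_Ioc_lt_top⟩
  exact Integrable.mono' (integrable_const C) hf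
    ((ae_restrict_iff' measurableSet_uIoc).2 (Filter.Eventually.of_forall h))

section TS
variable {q : ℕ} {ts : ℕ → ℝ}

lemma ts_le (htsmono : ∀ i, i < q → ts i ≤ ts (i + 1)) {i j : ℕ}
    (hij : i ≤ j) (hj : j ≤ q) : ts i ≤ ts j := by
  induction j, hij using Nat.le_induction with
  | base => exact le_rfl
  | succ k hk ih => exact le_trans (ih (by omega)) (htsmono k (by omega))

lemma ts_nonneg (hts0 : ts 0 = 0) (htsmono : ∀ i, i < q → ts i ≤ ts (i + 1))
    {k : ℕ} (hk : k ≤ q) : 0 ≤ ts k := by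
  rw [← hts0]; exact ts_le htsmono (Nat.zero_le k) hk

end TS
section Lam
variable {q : ℕ} {ts : ℕ → ℝ} {Clam : ℝ} {lam : ℕ → ℝ → ℝ}

lemma lam_intInt (hlam_meas : ∀ i, Measurable (lam i))
    (hlam_bd : ∀ i s, 0 ≤ s → lam i s ∈ Set.Icc 0 Clam)
    (i : ℕ) {a b : ℝ} (ha : 0 ≤ a) (hb : 0 ≤ b) :
    IntervalIntegrable (lam i) volume a b := by
  apply intInt_of_bdd ((hlam_meas i).aestronglyMeasurable.restrict) (C := Clam)
  intro s hs
  have hs0 : 0 ≤ s := le_of_lt (lt_of_le_of_lt (le_min ha hb) hs.1)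
  have := hlam_bd i s hs0
  rw [abs_of_nonneg this.1]; exact this.2

lemma Lam_nonneg (hlam_bd : ∀ i s, 0 ≤ s → lam i s ∈ Set.Icc 0 Clam)
    (i : ℕ) {t : ℝ} (ht : 0 ≤ t) : 0 ≤ Lam lam i t := by
  apply intervalIntegral.integral_nonneg ht
  intro u hu; exact (hlam_bd i u hu.1).1

lemma Lam_lip (hlam_meas : ∀ i, Measurable (lam i))
    (hlam_bd : ∀ i s, 0 ≤ s → lam i s ∈ Set.Icc 0 Clam)
    (i : ℕ) {a b : ℝ} (ha : 0 ≤ a) (hb : 0 ≤ b) :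
    |Lam lam i a - Lam lam i b| ≤ Clam * |a - b| := by
  have h1 : Lam lam i a - Lam lam i b = ∫ s in b..a, lam i s :=
    intervalIntegral.integral_interval_sub_left
      (lam_intInt hlam_meas hlam_bd i le_rfl ha)
      (lam_intInt hlam_meas hlam_bd i le_rfl hb)
  rw [h1, ← Real.norm_eq_abs]
  have := intervalIntegral.norm_integral_le_of_norm_le_const (C := Clam)
    (f := lam i) (a := b) (b := a) ?_
  · simpa [abs_sub_comm a b] using this
  · intro x hx
    have hx0 : 0 ≤ x := le_of_lt (lt_of_le_of_lt (le_min hb ha) hx.1)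
    have := hlam_bd i x hx0
    rw [Real.norm_eq_abs, abs_of_nonneg this.1]; exact this.2

/-- clamp to `[0, T]`. -/
def cl (T t : ℝ) : ℝ := max 0 (min t T)

/-- A modified primitive which is continuous everywhere and agrees with `Lam` on `[0, T]`. -/
def LamAux (lam : ℕ → ℝ → ℝ) (T : ℝ) (i : ℕ) (t : ℝ) : ℝ :=
  ∫ s in (0:ℝ)..t, lam i (cl T s)

lemma LamAux_cont (hlam_meas : ∀ i, Measurable (lam i))
    (hlam_bd : ∀ i s, 0 ≤ s → lam i s ∈ Set.Icc 0 Clam) (T : ℝ) (i : ℕ) :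
    Continuous (LamAux lam T i) := by
  apply intervalIntegral.continuous_primitive
  intro a b
  apply intInt_of_bdd (C := Clam)
  · have hcl : Continuous (cl T) :=
      Continuous.max continuous_const (continuous_id.min continuous_const)
    exact ((hlam_meas i).comp hcl.measurable).aestronglyMeasurable.restrict
  · intro s _
    have h0 : 0 ≤ cl T s := le_max_left _ _
    have := hlam_bd i (cl T s) h0
    rw [abs_of_nonneg this.1]; exact this.2

lemma LamAux_eq {T : ℝ} (i : ℕ) {t : ℝ} (ht : 0 ≤ t) (htT : t ≤ T) :
    LamAux lam T i t = Lam lam i t := by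
  apply intervalIntegral.integral_congr
  intro s hs
  rw [Set.uIcc_of_le ht] at hs
  show lam i (cl T s) = lam i s
  rw [cl, min_eq_left (le_trans hs.2 htT), max_eq_right hs.1]

end Lam
section Psi
variable {q d : ℕ} {ts : ℕ → ℝ} {Clam : ℝ} {lam : ℕ → ℝ → ℝ}
  {Q : ℕ → ℕ → ℝ → ℝ} {fW : (Fin d → ℝ) → ℝ} {phi : ℕ → Fin d → ℝ}

lemma Psi_mem1 (hts0 : ts 0 = 0) (htsmono : ∀ i, i < q → ts i ≤ ts (i + 1))
    (hlam_bd : ∀ i s, 0 ≤ s → lam i s ∈ Set.Icc 0 Clam)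
    (hQ_bd : ∀ i j s, 0 ≤ s → Q i j s ∈ Set.Icc (0:ℝ) 1)
    (hfW_nonneg : ∀ y, 0 ≤ fW y)
    {p : ℕ → ℝ} (hp : mem1 q p) (y : Fin d → ℝ) (s : ℝ) :
    mem1 q (Psi q d ts lam Q fW phi p y s) := by
  classical
  by_cases h1 : ∃ m, 1 ≤ m ∧ m ≤ q ∧ s = ts m
  · obtain ⟨hM1, hMq, hsM⟩ := Nat.sInf_mem h1
    set M := sInf {m | 1 ≤ m ∧ m ≤ q ∧ s = ts m} with hMdef
    by_cases h2 : 0 < ∑ k ∈ Finset.Icc 1 q, Q M k (ts M) * fW (y - phi k)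
    · simp only [Psi, if_pos h1, ← hMdef, if_pos h2]
      constructor
      · intro j _
        exact div_nonneg (mul_nonneg
          (hQ_bd M j (ts M) (ts_nonneg hts0 htsmono hMq)).1 (hfW_nonneg _)) h2.le
      · rw [← Finset.sum_div]
        exact div_self (ne_of_gt h2)
    · simp only [Psi, if_pos h1, ← hMdef, if_neg h2]
      exact hp
  · by_cases h3 : ∃ m, m < q ∧ ts m < s ∧ s < ts (m + 1)
    · obtain ⟨hMq, hMs, hsM⟩ := Nat.sInf_mem h3
      set M := sInf {m | m < q ∧ ts m < s ∧ s < ts (m + 1)} with hMdef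
      have hs0 : 0 ≤ s := le_of_lt (lt_of_le_of_lt (ts_nonneg hts0 htsmono hMq.le) hMs)
      have hnum : ∀ j, 0 ≤ psiNum q d ts lam Q fW phi M p y s j := by
        intro j
        apply Finset.sum_nonneg
        intro i hi
        rw [Finset.mem_Icc] at hi
        have hpi : 0 ≤ p i := hp.1 i (Finset.mem_Icc.2 ⟨by omega, hi.2⟩)
        have := (hlam_bd i s hs0).1
        have := (hQ_bd i j s hs0).1
        have := hfW_nonneg (y - phi j)
        positivity
      by_cases h4 : 0 < psiBar q d ts lam Q fW phi M p y s
      · simp only [Psi, if_neg h1, if_pos h3, ← hMdef, if_pos h4]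
        constructor
        · intro j _
          exact div_nonneg (hnum j) h4.le
        · rw [← Finset.sum_div]
          exact div_self (ne_of_gt h4)
      · simp only [Psi, if_neg h1, if_pos h3, ← hMdef, if_neg h4]
        exact hp
    · simp only [Psi, if_neg h1, if_neg h3]
      exact hp

lemma Psi_meas_y (hfW_meas : Measurable fW) (p : ℕ → ℝ) (s : ℝ) :
    Measurable (fun y => Psi q d ts lam Q fW phi p y s) := by
  classical
  by_cases h1 : ∃ m, 1 ≤ m ∧ m ≤ q ∧ s = ts m
  · simp only [Psi, if_pos h1]
    set M := sInf {m | 1 ≤ m ∧ m ≤ q ∧ s = ts m}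
    have hS : Measurable (fun y : Fin d → ℝ =>
        ∑ k ∈ Finset.Icc 1 q, Q M k (ts M) * fW (y - phi k)) := by
      apply Finset.measurable_sum
      intro k _
      exact (hfW_meas.comp (measurable_id.sub measurable_const)).const_mul _
    apply measurable_pi_lambda
    intro j
    simp only [apply_ite (fun f : ℕ → ℝ => f j)]
    apply Measurable.ite (measurableSet_lt measurable_const hS)
    · exact ((hfW_meas.comp (measurable_id.sub measurable_const)).const_mul _).div hS
    · exact measurable_const
  · by_cases h3 : ∃ m, m < q ∧ ts m < s ∧ s < ts (m + 1)
    · simp only [Psi, if_neg h1, if_pos h3]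
      set M := sInf {m | m < q ∧ ts m < s ∧ s < ts (m + 1)}
      have hnum : ∀ j, Measurable
          (fun y : Fin d → ℝ => psiNum q d ts lam Q fW phi M p y s j) := by
        intro j
        apply Finset.measurable_sum
        intro i _
        exact (hfW_meas.comp (measurable_id.sub measurable_const)).const_mul _
      have hbar : Measurable
          (fun y : Fin d → ℝ => psiBar q d ts lam Q fW phi M p y s) :=
        Finset.measurable_sum _ (fun k _ => hnum k)
      apply measurable_pi_lambda
      intro j
      simp only [apply_ite (fun f : ℕ → ℝ => f j)]
      apply Measurable.ite (measurableSet_lt measurable_const hbar)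
      · exact (hnum j).div hbar
      · exact measurable_const
    · simp only [Psi, if_neg h1, if_neg h3]
      exact measurable_const

end Psi
section Ybound
variable {q d : ℕ} {ts : ℕ → ℝ} {Clam : ℝ} {lam : ℕ → ℝ → ℝ}
  {Q : ℕ → ℕ → ℝ → ℝ} {fW : (Fin d → ℝ) → ℝ} {phi : ℕ → Fin d → ℝ}
  {v : (ℕ → ℝ) → ℝ} {Cv : ℝ}

lemma fW_integrable (hfW_int : ∫ y : Fin d → ℝ, fW y = 1) : Integrable fW := by
  by_contra h
  rw [integral_undef h] at hfW_int
  norm_num at hfW_int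

/-- The inner integral in `Iop` is bounded by `Cv`. -/
lemma Y_bound (hts0 : ts 0 = 0) (htsmono : ∀ i, i < q → ts i ≤ ts (i + 1))
    (hlam_bd : ∀ i s, 0 ≤ s → lam i s ∈ Set.Icc 0 Clam)
    (hQ_bd : ∀ i j s, 0 ≤ s → Q i j s ∈ Set.Icc (0:ℝ) 1)
    (hQ_sum : ∀ i s, 0 ≤ s → ∑ j ∈ Finset.Icc 1 q, Q i j s = 1)
    (hfW_nonneg : ∀ y, 0 ≤ fW y) (hfW_int : ∫ y : Fin d → ℝ, fW y = 1)
    (hCv : 0 ≤ Cv) (hv_bd : ∀ p, mem1 q p → |v p| ≤ Cv)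
    {p : ℕ → ℝ} (hp : mem1 q p) (i : ℕ) {s : ℝ} (hs : 0 ≤ s) :
    |∫ y : Fin d → ℝ, v (Psi q d ts lam Q fW phi p y s) *
      ∑ j ∈ Finset.Icc 1 q, Q i j s * fW (y - phi j)| ≤ Cv := by
  have hWint : Integrable (fun y : Fin d → ℝ =>
      ∑ j ∈ Finset.Icc 1 q, Q i j s * fW (y - phi j)) := by
    apply integrable_finset_sum
    intro j _
    exact ((fW_integrable hfW_int).comp_sub_right (phi j)).const_mul _
  have hWnn : ∀ y : Fin d → ℝ, 0 ≤ ∑ j ∈ Finset.Icc 1 q, Q i j s * fW (y - phi j) := by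
    intro y
    exact Finset.sum_nonneg fun j _ => mul_nonneg (hQ_bd i j s hs).1 (hfW_nonneg _)
  have key : ‖∫ y : Fin d → ℝ, v (Psi q d ts lam Q fW phi p y s) *
      ∑ j ∈ Finset.Icc 1 q, Q i j s * fW (y - phi j)‖ ≤
      ∫ y : Fin d → ℝ, Cv * ∑ j ∈ Finset.Icc 1 q, Q i j s * fW (y - phi j) := by
    apply norm_integral_le_of_norm_le (hWint.const_mul Cv)
    apply Filter.Eventually.of_forall
    intro y
    rw [Real.norm_eq_abs, abs_mul, abs_of_nonneg (hWnn y)]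
    exact mul_le_mul_of_nonneg_right
      (hv_bd _ (Psi_mem1 hts0 htsmono hlam_bd hQ_bd hfW_nonneg hp y s)) (hWnn y)
  rw [← Real.norm_eq_abs]
  refine le_trans key ?_
  rw [integral_const_mul]
  have : ∫ y : Fin d → ℝ, ∑ j ∈ Finset.Icc 1 q, Q i j s * fW (y - phi j) = 1 := by
    rw [integral_finset_sum _ (fun j _ =>
      ((fW_integrable hfW_int).comp_sub_right (phi j)).const_mul _)]
    have : ∀ j ∈ Finset.Icc 1 q,
        ∫ y : Fin d → ℝ, Q i j s * fW (y - phi j) = Q i j s := by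
      intro j _
      rw [integral_const_mul, integral_sub_right_eq_self fW (phi j), hfW_int, mul_one]
    rw [Finset.sum_congr rfl this, hQ_sum i s hs]
  rw [this, mul_one]

end Ybound
section Fint
variable {q d : ℕ} {ts : ℕ → ℝ} {Clam : ℝ} {lam : ℕ → ℝ → ℝ}
  {Q : ℕ → ℕ → ℝ → ℝ} {fW : (Fin d → ℝ) → ℝ} {phi : ℕ → Fin d → ℝ}
  {v : (ℕ → ℝ) → ℝ} {Cv : ℝ}

/-- Auxiliary version of `psiNum` built from the continuous primitive `LamAux`. -/
def psiNumAux (q d : ℕ) (ts : ℕ → ℝ) (lam : ℕ → ℝ → ℝ) (Q : ℕ → ℕ → ℝ → ℝ)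
    (fW : (Fin d → ℝ) → ℝ) (phi : ℕ → Fin d → ℝ) (T : ℝ)
    (m : ℕ) (p : ℕ → ℝ) (y : Fin d → ℝ) (s : ℝ) (j : ℕ) : ℝ :=
  ∑ i ∈ Finset.Icc (m + 1) q,
    p i * lam i s * Real.exp (-(LamAux lam T i s)) * Q i j s * fW (y - phi j)

def psiBarAux (q d : ℕ) (ts : ℕ → ℝ) (lam : ℕ → ℝ → ℝ) (Q : ℕ → ℕ → ℝ → ℝ)
    (fW : (Fin d → ℝ) → ℝ) (phi : ℕ → Fin d → ℝ) (T : ℝ)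
    (m : ℕ) (p : ℕ → ℝ) (y : Fin d → ℝ) (s : ℝ) : ℝ :=
  ∑ k ∈ Finset.Icc 1 q, psiNumAux q d ts lam Q fW phi T m p y s k

open Classical in
def Psi2Aux (q d : ℕ) (ts : ℕ → ℝ) (lam : ℕ → ℝ → ℝ) (Q : ℕ → ℕ → ℝ → ℝ)
    (fW : (Fin d → ℝ) → ℝ) (phi : ℕ → Fin d → ℝ) (T : ℝ) (m : ℕ)
    (p : ℕ → ℝ) (y : Fin d → ℝ) (s : ℝ) : ℕ → ℝ :=
  if 0 < psiBarAux q d ts lam Q fW phi T m p y s then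
    fun j => psiNumAux q d ts lam Q fW phi T m p y s j /
      psiBarAux q d ts lam Q fW phi T m p y s
  else p

/-- The minimal index whose surrounding interval contains `(ts k, ts (k+1))`. -/
def cval (q : ℕ) (ts : ℕ → ℝ) (k : ℕ) : ℕ :=
  sInf {m | m < q ∧ ts m ≤ ts k ∧ ts (k + 1) ≤ ts (m + 1)}

/-- The integrand of `Iop`. -/
def Fint (q d : ℕ) (ts : ℕ → ℝ) (lam : ℕ → ℝ → ℝ) (Q : ℕ → ℕ → ℝ → ℝ)
    (fW : (Fin d → ℝ) → ℝ) (phi : ℕ → Fin d → ℝ)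
    (v : (ℕ → ℝ) → ℝ) (p : ℕ → ℝ) (i : ℕ) (s : ℝ) : ℝ :=
  lam i s * Real.exp (-(Lam lam i s)) *
    ∫ y : Fin d → ℝ,
      v (Psi q d ts lam Q fW phi p y s) *
        ∑ j ∈ Finset.Icc 1 q, Q i j s * fW (y - phi j)

/-- The measurable surrogate for `Fint` on the interval `(ts k, ts (k+1))`. -/
def FfixA (q d : ℕ) (ts : ℕ → ℝ) (lam : ℕ → ℝ → ℝ) (Q : ℕ → ℕ → ℝ → ℝ)
    (fW : (Fin d → ℝ) → ℝ) (phi : ℕ → Fin d → ℝ)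
    (v : (ℕ → ℝ) → ℝ) (p : ℕ → ℝ) (i k : ℕ) (s : ℝ) : ℝ :=
  lam i s * Real.exp (-(LamAux lam (ts q) i s)) *
    ∫ y : Fin d → ℝ,
      v (Psi2Aux q d ts lam Q fW phi (ts q) k p y s) *
        ∑ j ∈ Finset.Icc 1 q, Q i j s * fW (y - phi j)

def Fhat (q d : ℕ) (ts : ℕ → ℝ) (lam : ℕ → ℝ → ℝ) (Q : ℕ → ℕ → ℝ → ℝ)
    (fW : (Fin d → ℝ) → ℝ) (phi : ℕ → Fin d → ℝ)
    (v : (ℕ → ℝ) → ℝ) (p : ℕ → ℝ) (i : ℕ) (s : ℝ) : ℝ :=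
  ∑ k ∈ Finset.range q,
    (Set.Ioo (ts k) (ts (k + 1))).indicator
      (FfixA q d ts lam Q fW phi v p i (cval q ts k)) s

lemma psiNumAux_eq (m : ℕ) (p : ℕ → ℝ) (y : Fin d → ℝ) {s T : ℝ}
    (hs : 0 ≤ s) (hsT : s ≤ T) (j : ℕ) :
    psiNumAux q d ts lam Q fW phi T m p y s j = psiNum q d ts lam Q fW phi m p y s j := by
  apply Finset.sum_congr rfl
  intro i _
  rw [LamAux_eq i hs hsT]

lemma psiBarAux_eq (m : ℕ) (p : ℕ → ℝ) (y : Fin d → ℝ) {s T : ℝ}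
    (hs : 0 ≤ s) (hsT : s ≤ T) :
    psiBarAux q d ts lam Q fW phi T m p y s = psiBar q d ts lam Q fW phi m p y s :=
  Finset.sum_congr rfl fun k _ => psiNumAux_eq m p y hs hsT k

lemma Psi2Aux_meas (hlam_meas : ∀ i, Measurable (lam i))
    (hlam_bd : ∀ i s, 0 ≤ s → lam i s ∈ Set.Icc 0 Clam)
    (hQ_meas : ∀ i j, Measurable (Q i j)) (hfW_meas : Measurable fW)
    (T : ℝ) (k : ℕ) (p : ℕ → ℝ) :
    Measurable (fun x : ℝ × (Fin d → ℝ) =>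
      Psi2Aux q d ts lam Q fW phi T k p x.2 x.1) := by
  have hnum : ∀ j, Measurable (fun x : ℝ × (Fin d → ℝ) =>
      psiNumAux q d ts lam Q fW phi T k p x.2 x.1 j) := by
    intro j
    apply Finset.measurable_sum
    intro i' _
    have m1 : Measurable (fun x : ℝ × (Fin d → ℝ) => p i' * lam i' x.1) :=
      ((hlam_meas i').comp measurable_fst).const_mul _
    have m2 : Measurable (fun x : ℝ × (Fin d → ℝ) =>
        Real.exp (-(LamAux lam T i' x.1))) :=
      Real.measurable_exp.comp
        (((LamAux_cont hlam_meas hlam_bd T i').measurable.comp measurable_fst).neg)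
    have m3 : Measurable (fun x : ℝ × (Fin d → ℝ) => Q i' j x.1) :=
      (hQ_meas i' j).comp measurable_fst
    have m4 : Measurable (fun x : ℝ × (Fin d → ℝ) => fW (x.2 - phi j)) :=
      hfW_meas.comp (measurable_snd.sub measurable_const)
    exact ((m1.mul m2).mul m3).mul m4
  have hbar : Measurable (fun x : ℝ × (Fin d → ℝ) =>
      psiBarAux q d ts lam Q fW phi T k p x.2 x.1) :=
    Finset.measurable_sum _ fun j _ => hnum j
  apply measurable_pi_lambda
  intro j
  simp only [Psi2Aux, apply_ite (fun f : ℕ → ℝ => f j)]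
  exact Measurable.ite (measurableSet_lt measurable_const hbar)
    ((hnum j).div hbar) measurable_const

lemma Fhat_meas (hlam_meas : ∀ i, Measurable (lam i))
    (hlam_bd : ∀ i s, 0 ≤ s → lam i s ∈ Set.Icc 0 Clam)
    (hQ_meas : ∀ i j, Measurable (Q i j)) (hfW_meas : Measurable fW)
    (hv_meas : Measurable v) (p : ℕ → ℝ) (i : ℕ) :
    Measurable (Fhat q d ts lam Q fW phi v p i) := by
  apply Finset.measurable_sum
  intro k _
  apply Measurable.indicator _ measurableSet_Ioo
  have hH : Measurable (fun x : ℝ × (Fin d → ℝ) =>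
      v (Psi2Aux q d ts lam Q fW phi (ts q) (cval q ts k) p x.2 x.1) *
        ∑ j ∈ Finset.Icc 1 q, Q i j x.1 * fW (x.2 - phi j)) := by
    apply Measurable.mul
    · exact hv_meas.comp (Psi2Aux_meas hlam_meas hlam_bd hQ_meas hfW_meas _ _ p)
    · apply Finset.measurable_sum
      intro j _
      exact ((hQ_meas i j).comp measurable_fst).mul
        (hfW_meas.comp (measurable_snd.sub measurable_const))
  have hint : StronglyMeasurable (fun s : ℝ =>
      ∫ y : Fin d → ℝ,
        v (Psi2Aux q d ts lam Q fW phi (ts q) (cval q ts k) p y s) *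
          ∑ j ∈ Finset.Icc 1 q, Q i j s * fW (y - phi j)) :=
    hH.stronglyMeasurable.integral_prod_right'
  apply Measurable.mul
  · exact ((hlam_meas i).mul (Real.measurable_exp.comp
      ((LamAux_cont hlam_meas hlam_bd (ts q) i).measurable.neg)))
  · exact hint.measurable


lemma Fint_eq_Fhat (hts0 : ts 0 = 0) (htsmono : ∀ i, i < q → ts i ≤ ts (i + 1))
    (p : ℕ → ℝ) (i : ℕ) {s : ℝ} (hs0 : 0 < s) (hsq : s < ts q)
    (hD : ∀ k, k ≤ q → s ≠ ts k) :
    Fint q d ts lam Q fW phi v p i s = Fhat q d ts lam Q fW phi v p i s := by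
  classical
  set k := Nat.findGreatest (fun j => ts j < s) q with hkdef
  have hPk : ts k < s := Nat.findGreatest_spec (P := fun j => ts j < s) (Nat.zero_le q) (by show ts 0 < s; rw [hts0]; exact hs0)
  have hkq : k ≤ q := Nat.findGreatest_le q
  have hklt : k < q := by
    rcases lt_or_eq_of_le hkq with h | h
    · exact h
    · exfalso; rw [h] at hPk; exact absurd hsq (not_lt.2 hPk.le)
  have hs_lt : s < ts (k + 1) := by
    have h := Nat.findGreatest_is_greatest (Nat.lt_succ_self k) (by omega :
      k + 1 ≤ q)
    exact lt_of_le_of_ne (not_lt.1 h) (hD (k + 1) (by omega))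
  -- the sum of indicators collapses to the k-th term
  have hFhat : Fhat q d ts lam Q fW phi v p i s =
      FfixA q d ts lam Q fW phi v p i (cval q ts k) s := by
    rw [Fhat]
    rw [Finset.sum_eq_single_of_mem k (Finset.mem_range.2 hklt)]
    · exact Set.indicator_of_mem (Set.mem_Ioo.2 ⟨hPk, hs_lt⟩) _
    · intro k' hk' hne
      rw [Finset.mem_range] at hk'
      apply Set.indicator_of_notMem
      intro hmem
      rcases lt_or_gt_of_ne hne with h | h
      · have : ts (k' + 1) ≤ ts k := ts_le htsmono (by omega) hkq
        exact absurd hmem.2 (not_lt.2 (le_trans this hPk.le))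
      · have : ts (k + 1) ≤ ts k' := ts_le htsmono (by omega) (by omega)
        exact absurd hmem.1 (not_lt.2 (le_trans hs_lt.le this))
  rw [hFhat]
  -- now show the two sides agree
  have hsq' : s ≤ ts q := hsq.le
  have hPsi : ∀ y : Fin d → ℝ, Psi q d ts lam Q fW phi p y s =
      Psi2Aux q d ts lam Q fW phi (ts q) (cval q ts k) p y s := by
    intro y
    have h1 : ¬∃ m, 1 ≤ m ∧ m ≤ q ∧ s = ts m := by
      rintro ⟨m, -, hmq, he⟩
      exact hD m hmq he
    have h3 : ∃ m, m < q ∧ ts m < s ∧ s < ts (m + 1) := ⟨k, hklt, hPk, hs_lt⟩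
    have hSet : {m | m < q ∧ ts m < s ∧ s < ts (m + 1)} =
        {m | m < q ∧ ts m ≤ ts k ∧ ts (k + 1) ≤ ts (m + 1)} := by
      ext m
      simp only [Set.mem_setOf_eq]
      constructor
      · rintro ⟨hmq, hms, hsm⟩
        refine ⟨hmq, ?_, ?_⟩
        · by_contra hc
          push_neg at hc
          have hmk : ¬ m ≤ k := fun hmk => absurd (ts_le htsmono hmk hkq) (not_le.2 hc)
          have : ts (k + 1) ≤ ts m := ts_le htsmono (by omega) hmq.le
          exact absurd hms (not_lt.2 (le_trans hs_lt.le this))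
        · by_contra hc
          push_neg at hc
          have hmk : ¬ k + 1 ≤ m + 1 := fun hmk =>
            absurd (ts_le htsmono hmk (by omega)) (not_le.2 hc)
          have : ts (m + 1) ≤ ts k := ts_le htsmono (by omega) hkq
          exact absurd hsm (not_lt.2 (le_trans this hPk.le))
      · rintro ⟨hmq, hms, hsm⟩
        exact ⟨hmq, lt_of_le_of_lt hms hPk, lt_of_lt_of_le hs_lt hsm⟩
    have hnum_eq : ∀ j, psiNum q d ts lam Q fW phi (cval q ts k) p y s j =
        psiNumAux q d ts lam Q fW phi (ts q) (cval q ts k) p y s j :=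
      fun j => (psiNumAux_eq _ p y hs0.le hsq' j).symm
    have hbar_eq : psiBar q d ts lam Q fW phi (cval q ts k) p y s =
        psiBarAux q d ts lam Q fW phi (ts q) (cval q ts k) p y s :=
      (psiBarAux_eq _ p y hs0.le hsq').symm
    simp only [Psi, if_neg h1, if_pos h3, hSet]
    rw [show sInf {m | m < q ∧ ts m ≤ ts k ∧ ts (k + 1) ≤ ts (m + 1)} = cval q ts k
      from rfl]
    simp only [Psi2Aux, hbar_eq, hnum_eq]
  rw [Fint, FfixA, LamAux_eq i hs0.le hsq']
  congr 1
  apply integral_congr_ae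
  apply Filter.Eventually.of_forall
  intro y
  simp only [hPsi]

lemma Fint_bound (hts0 : ts 0 = 0) (htsmono : ∀ i, i < q → ts i ≤ ts (i + 1))
    (hClam : 0 ≤ Clam)
    (hlam_bd : ∀ i s, 0 ≤ s → lam i s ∈ Set.Icc 0 Clam)
    (hQ_bd : ∀ i j s, 0 ≤ s → Q i j s ∈ Set.Icc (0:ℝ) 1)
    (hQ_sum : ∀ i s, 0 ≤ s → ∑ j ∈ Finset.Icc 1 q, Q i j s = 1)
    (hfW_nonneg : ∀ y, 0 ≤ fW y) (hfW_int : ∫ y : Fin d → ℝ, fW y = 1)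
    (hCv : 0 ≤ Cv) (hv_bd : ∀ p, mem1 q p → |v p| ≤ Cv)
    {p : ℕ → ℝ} (hp : mem1 q p) (i : ℕ) {s : ℝ} (hs : 0 ≤ s) :
    |Fint q d ts lam Q fW phi v p i s| ≤ Clam * Cv := by
  have h1 : |lam i s| ≤ Clam := by
    have := hlam_bd i s hs
    rw [abs_of_nonneg this.1]; exact this.2
  have h2 : |Real.exp (-(Lam lam i s))| ≤ 1 := by
    rw [abs_of_nonneg (Real.exp_pos _).le]
    exact Real.exp_le_one_iff.2 (neg_nonpos.2 (Lam_nonneg hlam_bd i hs))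
  have h3 := Y_bound hts0 htsmono hlam_bd hQ_bd hQ_sum hfW_nonneg hfW_int hCv
    hv_bd hp i hs (phi := phi) (v := v)
  rw [Fint, abs_mul, abs_mul]
  calc |lam i s| * |Real.exp (-(Lam lam i s))| * |_| ≤ Clam * 1 * Cv := by
        apply mul_le_mul (mul_le_mul h1 h2 (abs_nonneg _) hClam) h3 (abs_nonneg _)
          (by positivity)
    _ = Clam * Cv := by ring

lemma Fint_intInt (hts0 : ts 0 = 0) (htsmono : ∀ i, i < q → ts i ≤ ts (i + 1))
    (hClam : 0 ≤ Clam)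
    (hlam_meas : ∀ i, Measurable (lam i))
    (hlam_bd : ∀ i s, 0 ≤ s → lam i s ∈ Set.Icc 0 Clam)
    (hQ_meas : ∀ i j, Measurable (Q i j))
    (hQ_bd : ∀ i j s, 0 ≤ s → Q i j s ∈ Set.Icc (0:ℝ) 1)
    (hQ_sum : ∀ i s, 0 ≤ s → ∑ j ∈ Finset.Icc 1 q, Q i j s = 1)
    (hfW_meas : Measurable fW)
    (hfW_nonneg : ∀ y, 0 ≤ fW y) (hfW_int : ∫ y : Fin d → ℝ, fW y = 1)
    (hv_meas : Measurable v)
    (hCv : 0 ≤ Cv) (hv_bd : ∀ p, mem1 q p → |v p| ≤ Cv)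
    {p : ℕ → ℝ} (hp : mem1 q p) (i : ℕ) {a b : ℝ}
    (ha : 0 ≤ a) (ha' : a ≤ ts q) (hb : 0 ≤ b) (hb' : b ≤ ts q) :
    IntervalIntegrable (Fint q d ts lam Q fW phi v p i) volume a b := by
  rw [intervalIntegrable_iff]
  haveI : IsFiniteMeasure (volume.restrict (Set.uIoc a b)) :=
    ⟨by rw [Measure.restrict_apply_univ, Set.uIoc]; exact measure_Ioc_lt_top⟩
  apply Integrable.mono' (integrable_const (Clam * Cv))
  · apply AEStronglyMeasurable.congr
      ((Fhat_meas hlam_meas hlam_bd hQ_meas hfW_meas hv_meas p i).aestronglyMeasurable.restrict)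
    have hnull : volume {x : ℝ | ∃ k, k ≤ q ∧ x = ts k} = 0 := by
      apply measure_mono_null ?_ ((Set.countable_range ts).measure_zero (volume : Measure ℝ))
      rintro x ⟨kk, -, he⟩
      exact ⟨kk, he.symm⟩
    have hae : ∀ᵐ x : ℝ, x ∉ {x : ℝ | ∃ k, k ≤ q ∧ x = ts k} :=
      compl_mem_ae_iff.mpr hnull
    filter_upwards [ae_restrict_mem measurableSet_uIoc, ae_restrict_of_ae hae]
      with s hsI hsD
    have hs0 : 0 < s := lt_of_le_of_lt (le_min ha hb) hsI.1
    have hsq : s < ts q := by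
      apply lt_of_le_of_ne (le_trans hsI.2 (max_le ha' hb'))
      intro he
      exact hsD ⟨q, le_rfl, he⟩
    exact (Fint_eq_Fhat hts0 htsmono p i hs0 hsq
      (fun k hk he => hsD ⟨k, hk, he⟩)).symm
  · filter_upwards [ae_restrict_mem measurableSet_uIoc] with s hsI
    have hs0 : 0 ≤ s := (lt_of_le_of_lt (le_min ha hb) hsI.1).le
    rw [Real.norm_eq_abs]
    exact Fint_bound hts0 htsmono hClam hlam_bd hQ_bd hQ_sum hfW_nonneg hfW_int
      hCv hv_bd hp i hs0

end Fint
section Ops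
variable {q d : ℕ} {ts : ℕ → ℝ} {Clam : ℝ} {lam : ℕ → ℝ → ℝ}
  {Q : ℕ → ℕ → ℝ → ℝ} {fW : (Fin d → ℝ) → ℝ} {phi : ℕ → Fin d → ℝ}
  {v : (ℕ → ℝ) → ℝ} {Cv : ℝ} {g : ℕ → ℝ → ℝ} {Cg g2 : ℝ}

lemma Iop_eq (p : ℕ → ℝ) (u : ℝ) :
    Iop q d ts lam Q fW phi v p u = ∑ i ∈ Finset.Icc 1 q,
      p i * ∫ s in (0:ℝ)..(min u (ts i)), Fint q d ts lam Q fW phi v p i s := rfl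

lemma Iop_lip (hts0 : ts 0 = 0) (htsmono : ∀ i, i < q → ts i ≤ ts (i + 1))
    (hClam : 0 ≤ Clam)
    (hlam_meas : ∀ i, Measurable (lam i))
    (hlam_bd : ∀ i s, 0 ≤ s → lam i s ∈ Set.Icc 0 Clam)
    (hQ_meas : ∀ i j, Measurable (Q i j))
    (hQ_bd : ∀ i j s, 0 ≤ s → Q i j s ∈ Set.Icc (0:ℝ) 1)
    (hQ_sum : ∀ i s, 0 ≤ s → ∑ j ∈ Finset.Icc 1 q, Q i j s = 1)
    (hfW_meas : Measurable fW)
    (hfW_nonneg : ∀ y, 0 ≤ fW y) (hfW_int : ∫ y : Fin d → ℝ, fW y = 1)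
    (hv_meas : Measurable v)
    (hCv : 0 ≤ Cv) (hv_bd : ∀ p, mem1 q p → |v p| ≤ Cv)
    {p : ℕ → ℝ} (hp : mem1 q p) {u u' : ℝ} (hu : 0 ≤ u) (hu' : 0 ≤ u') :
    |Iop q d ts lam Q fW phi v p u - Iop q d ts lam Q fW phi v p u'| ≤
      Clam * Cv * |u - u'| := by
  have htsq : 0 ≤ ts q := ts_nonneg hts0 htsmono le_rfl
  rw [Iop_eq, Iop_eq, ← Finset.sum_sub_distrib]
  refine le_trans (Finset.abs_sum_le_sum_abs _ _) ?_
  have key : ∀ i ∈ Finset.Icc 1 q,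
      |p i * (∫ s in (0:ℝ)..(min u (ts i)), Fint q d ts lam Q fW phi v p i s) -
        p i * ∫ s in (0:ℝ)..(min u' (ts i)), Fint q d ts lam Q fW phi v p i s| ≤
      p i * (Clam * Cv * |u - u'|) := by
    intro i hi
    have hiq : i ≤ q := (Finset.mem_Icc.1 hi).2
    have htsi0 : 0 ≤ ts i := ts_nonneg hts0 htsmono hiq
    have htsiq : ts i ≤ ts q := ts_le htsmono hiq le_rfl
    have hA0 : 0 ≤ min u (ts i) := le_min hu htsi0
    have hAq : min u (ts i) ≤ ts q := le_trans (min_le_right _ _) htsiq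
    have hB0 : 0 ≤ min u' (ts i) := le_min hu' htsi0
    have hBq : min u' (ts i) ≤ ts q := le_trans (min_le_right _ _) htsiq
    rw [← mul_sub, abs_mul, abs_of_nonneg (hp.1 i hi)]
    apply mul_le_mul_of_nonneg_left _ (hp.1 i hi)
    rw [intervalIntegral.integral_interval_sub_left
      (Fint_intInt hts0 htsmono hClam hlam_meas hlam_bd hQ_meas hQ_bd hQ_sum
        hfW_meas hfW_nonneg hfW_int hv_meas hCv hv_bd hp i le_rfl htsq hA0 hAq)
      (Fint_intInt hts0 htsmono hClam hlam_meas hlam_bd hQ_meas hQ_bd hQ_sum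
        hfW_meas hfW_nonneg hfW_int hv_meas hCv hv_bd hp i le_rfl htsq hB0 hBq)]
    have hbd := intervalIntegral.norm_integral_le_of_norm_le_const
      (C := Clam * Cv) (f := Fint q d ts lam Q fW phi v p i)
      (a := min u' (ts i)) (b := min u (ts i)) ?_
    · rw [← Real.norm_eq_abs]
      refine le_trans hbd ?_
      apply mul_le_mul_of_nonneg_left _ (by positivity)
      exact min_lip u u' (ts i)
    · intro x hx
      have hx0 : 0 ≤ x := (lt_of_le_of_lt (le_min hB0 hA0) hx.1).le
      rw [Real.norm_eq_abs]
      exact Fint_bound hts0 htsmono hClam hlam_bd hQ_bd hQ_sum hfW_nonneg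
        hfW_int hCv hv_bd hp i hx0
  refine le_trans (Finset.sum_le_sum key) ?_
  rw [← Finset.sum_mul, hp.2, one_mul]

lemma Iop_zero (hts0 : ts 0 = 0) (htsmono : ∀ i, i < q → ts i ≤ ts (i + 1))
    (p : ℕ → ℝ) : Iop q d ts lam Q fW phi v p 0 = 0 := by
  rw [Iop_eq]
  apply Finset.sum_eq_zero
  intro i hi
  rw [min_eq_left (ts_nonneg hts0 htsmono (Finset.mem_Icc.1 hi).2),
    intervalIntegral.integral_same, mul_zero]

/-- `Hop` is Lipschitz on `[ts m, ts (m+1))`. -/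
lemma Hop_lip (hts0 : ts 0 = 0) (htsmono : ∀ i, i < q → ts i ≤ ts (i + 1))
    (hClam : 0 ≤ Clam)
    (hlam_meas : ∀ i, Measurable (lam i))
    (hlam_bd : ∀ i s, 0 ≤ s → lam i s ∈ Set.Icc 0 Clam)
    (hCg : 0 ≤ Cg) (hg2 : 0 ≤ g2)
    (hg_bd : ∀ i ∈ Finset.Icc 1 q, ∀ t, 0 ≤ t → |g i t| ≤ Cg)
    (hg_lip : ∀ i ∈ Finset.Icc 1 q, ∀ t u, t ∈ Set.Icc 0 (ts i) → u ∈ Set.Icc 0 (ts i) →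
      |g i t - g i u| ≤ g2 * |t - u|)
    {p : ℕ → ℝ} (hp : mem1 q p) {m : ℕ} (hm : m < q)
    {u u' : ℝ} (hu : u ∈ Set.Ico (ts m) (ts (m + 1))) (hu' : u' ∈ Set.Ico (ts m) (ts (m + 1))) :
    |Hop q ts lam g p u - Hop q ts lam g p u'| ≤ (g2 + Cg * Clam) * |u - u'| := by
  have hm0 : 0 ≤ ts m := ts_nonneg hts0 htsmono hm.le
  have hu0 : 0 ≤ u := le_trans hm0 hu.1
  have hu'0 : 0 ≤ u' := le_trans hm0 hu'.1
  have hcond : ∀ w ∈ Set.Ico (ts m) (ts (m + 1)), ∀ i ∈ Finset.Icc 1 q,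
      (w < ts i ↔ m < i) := by
    intro w hw i hi
    rw [Finset.mem_Icc] at hi
    constructor
    · intro h
      by_contra hc
      push_neg at hc
      exact absurd (lt_of_lt_of_le h (ts_le htsmono hc hm.le)) (not_lt.2 hw.1)
    · intro h
      exact lt_of_lt_of_le hw.2 (ts_le htsmono (by omega) hi.2)
  have hrw : ∀ w ∈ Set.Ico (ts m) (ts (m + 1)), Hop q ts lam g p w =
      ∑ i ∈ Finset.Icc 1 q,
        if m < i then p i * Real.exp (-(Lam lam i w)) * g i w else 0 := by
    intro w hw
    apply Finset.sum_congr rfl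
    intro i hi
    rw [if_congr (hcond w hw i hi) rfl rfl]
  rw [hrw u hu, hrw u' hu', ← Finset.sum_sub_distrib]
  refine le_trans (Finset.abs_sum_le_sum_abs _ _) ?_
  have key : ∀ i ∈ Finset.Icc 1 q,
      |(if m < i then p i * Real.exp (-(Lam lam i u)) * g i u else 0) -
        (if m < i then p i * Real.exp (-(Lam lam i u')) * g i u' else 0)| ≤
      p i * ((g2 + Cg * Clam) * |u - u'|) := by
    intro i hi
    have hiq : i ≤ q := (Finset.mem_Icc.1 hi).2
    by_cases hmi : m < i
    · rw [if_pos hmi, if_pos hmi]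
      have htsmi : ts (m + 1) ≤ ts i := ts_le htsmono (by omega) hiq
      have hui : u ∈ Set.Icc 0 (ts i) := ⟨hu0, le_trans hu.2.le htsmi⟩
      have hu'i : u' ∈ Set.Icc 0 (ts i) := ⟨hu'0, le_trans hu'.2.le htsmi⟩
      have hdec : p i * Real.exp (-(Lam lam i u)) * g i u -
          p i * Real.exp (-(Lam lam i u')) * g i u' =
          p i * ((Real.exp (-(Lam lam i u)) - Real.exp (-(Lam lam i u'))) * g i u +
            Real.exp (-(Lam lam i u')) * (g i u - g i u')) := by ring
      rw [hdec, abs_mul, abs_of_nonneg (hp.1 i hi)]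
      apply mul_le_mul_of_nonneg_left _ (hp.1 i hi)
      refine le_trans (abs_add_le _ _) ?_
      have h1 : |(Real.exp (-(Lam lam i u)) - Real.exp (-(Lam lam i u'))) * g i u| ≤
          (Clam * |u - u'|) * Cg := by
        rw [abs_mul]
        apply mul_le_mul _ (hg_bd i hi u hu0) (abs_nonneg _) (by positivity)
        refine le_trans (exp_neg_lip (Lam_nonneg hlam_bd i hu0)
          (Lam_nonneg hlam_bd i hu'0)) ?_
        exact Lam_lip hlam_meas hlam_bd i hu0 hu'0
      have h2 : |Real.exp (-(Lam lam i u')) * (g i u - g i u')| ≤ g2 * |u - u'| := by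
        rw [abs_mul, abs_of_nonneg (Real.exp_pos _).le]
        refine le_trans (mul_le_mul
          (Real.exp_le_one_iff.2 (neg_nonpos.2 (Lam_nonneg hlam_bd i hu'0)))
          (hg_lip i hi u u' hui hu'i) (abs_nonneg _) zero_le_one) ?_
        rw [one_mul]
      calc _ ≤ (Clam * |u - u'|) * Cg + g2 * |u - u'| := add_le_add h1 h2
        _ = (g2 + Cg * Clam) * |u - u'| := by ring
    · rw [if_neg hmi, if_neg hmi, sub_zero, abs_zero]
      have := hp.1 i hi
      positivity
  refine le_trans (Finset.sum_le_sum key) ?_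
  rw [← Finset.sum_mul, hp.2, one_mul]

end Ops
section Jop
variable {q d : ℕ} {ts : ℕ → ℝ} {Clam : ℝ} {lam : ℕ → ℝ → ℝ}
  {Q : ℕ → ℕ → ℝ → ℝ} {fW : (Fin d → ℝ) → ℝ} {phi : ℕ → Fin d → ℝ}
  {v : (ℕ → ℝ) → ℝ} {Cv : ℝ} {g : ℕ → ℝ → ℝ} {Cg g2 : ℝ}

lemma Hop_bd (hts0 : ts 0 = 0) (htsmono : ∀ i, i < q → ts i ≤ ts (i + 1))
    (hlam_bd : ∀ i s, 0 ≤ s → lam i s ∈ Set.Icc 0 Clam)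
    (hCg : 0 ≤ Cg) (hg_bd : ∀ i ∈ Finset.Icc 1 q, ∀ t, 0 ≤ t → |g i t| ≤ Cg)
    {p : ℕ → ℝ} (hp : mem1 q p) {u : ℝ} (hu : 0 ≤ u) :
    |Hop q ts lam g p u| ≤ Cg := by
  rw [Hop]
  refine le_trans (Finset.abs_sum_le_sum_abs _ _) ?_
  have key : ∀ i ∈ Finset.Icc 1 q,
      |if u < ts i then p i * Real.exp (-(Lam lam i u)) * g i u else 0| ≤ p i * Cg := by
    intro i hi
    by_cases h : u < ts i
    · rw [if_pos h, abs_mul, abs_mul, abs_of_nonneg (hp.1 i hi),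
        abs_of_nonneg (Real.exp_pos _).le]
      have h1 : Real.exp (-(Lam lam i u)) ≤ 1 :=
        Real.exp_le_one_iff.2 (neg_nonpos.2 (Lam_nonneg hlam_bd i hu))
      have h2 := hg_bd i hi u hu
      have h3 := hp.1 i hi
      calc p i * Real.exp (-(Lam lam i u)) * |g i u| ≤ p i * 1 * Cg := by
            apply mul_le_mul (mul_le_mul_of_nonneg_left h1 h3) h2 (abs_nonneg _)
              (by positivity)
        _ = p i * Cg := by ring
    · rw [if_neg h, abs_zero]
      have := hp.1 i hi
      positivity
  refine le_trans (Finset.sum_le_sum key) ?_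
  rw [← Finset.sum_mul, hp.2, one_mul]

lemma bTerm_bd (hts0 : ts 0 = 0) (htsmono : ∀ i, i < q → ts i ≤ ts (i + 1))
    (hlam_bd : ∀ i s, 0 ≤ s → lam i s ∈ Set.Icc 0 Clam)
    (hQ_bd : ∀ i j s, 0 ≤ s → Q i j s ∈ Set.Icc (0:ℝ) 1)
    (hQ_sum : ∀ i s, 0 ≤ s → ∑ j ∈ Finset.Icc 1 q, Q i j s = 1)
    (hfW_nonneg : ∀ y, 0 ≤ fW y) (hfW_int : ∫ y : Fin d → ℝ, fW y = 1)
    (hCv : 0 ≤ Cv) (hv_bd : ∀ p, mem1 q p → |v p| ≤ Cv)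
    {p : ℕ → ℝ} (hp : mem1 q p) {i : ℕ} (hi : i ∈ Finset.Icc 1 q) :
    |bTerm q d ts lam Q fW phi v p i| ≤ p i * Cv := by
  have hts_i : 0 ≤ ts i := ts_nonneg hts0 htsmono (Finset.mem_Icc.1 hi).2
  rw [bTerm, abs_mul, abs_mul, abs_of_nonneg (hp.1 i hi),
    abs_of_nonneg (Real.exp_pos _).le]
  have h1 : Real.exp (-(Lam lam i (ts i))) ≤ 1 :=
    Real.exp_le_one_iff.2 (neg_nonpos.2 (Lam_nonneg hlam_bd i hts_i))
  have h2 := Y_bound hts0 htsmono hlam_bd hQ_bd hQ_sum hfW_nonneg hfW_int hCv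
    hv_bd hp i hts_i (phi := phi) (v := v)
  have h3 := hp.1 i hi
  calc p i * Real.exp (-(Lam lam i (ts i))) * |_| ≤ p i * 1 * Cv := by
        apply mul_le_mul (mul_le_mul_of_nonneg_left h1 h3) h2 (abs_nonneg _)
          (by positivity)
    _ = p i * Cv := by ring

lemma bSum_eq (htsmono : ∀ i, i < q → ts i ≤ ts (i + 1)) {m : ℕ} (hm : m < q)
    (p : ℕ → ℝ) {u : ℝ} (hu : u ∈ Set.Ico (ts m) (ts (m + 1))) :
    (∑ i ∈ Finset.Icc 1 q, if ts i ≤ u then bTerm q d ts lam Q fW phi v p i else 0) =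
    ∑ i ∈ Finset.Icc 1 q, if ts i ≤ ts m then bTerm q d ts lam Q fW phi v p i else 0 := by
  apply Finset.sum_congr rfl
  intro i hi
  have hiq : i ≤ q := (Finset.mem_Icc.1 hi).2
  apply if_congr _ rfl rfl
  constructor
  · intro h
    by_contra hc
    push_neg at hc
    have him : ¬ i ≤ m := fun hc' => absurd (ts_le htsmono hc' hm.le) (not_le.2 hc)
    have : ts (m + 1) ≤ ts i := ts_le htsmono (by omega) hiq
    exact absurd (lt_of_le_of_lt h hu.2) (not_lt.2 this)
  · intro h
    exact le_trans h hu.1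

lemma Jop_lip (hts0 : ts 0 = 0) (htsmono : ∀ i, i < q → ts i ≤ ts (i + 1))
    (hClam : 0 ≤ Clam)
    (hlam_meas : ∀ i, Measurable (lam i))
    (hlam_bd : ∀ i s, 0 ≤ s → lam i s ∈ Set.Icc 0 Clam)
    (hQ_meas : ∀ i j, Measurable (Q i j))
    (hQ_bd : ∀ i j s, 0 ≤ s → Q i j s ∈ Set.Icc (0:ℝ) 1)
    (hQ_sum : ∀ i s, 0 ≤ s → ∑ j ∈ Finset.Icc 1 q, Q i j s = 1)
    (hfW_meas : Measurable fW)
    (hfW_nonneg : ∀ y, 0 ≤ fW y) (hfW_int : ∫ y : Fin d → ℝ, fW y = 1)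
    (hv_meas : Measurable v)
    (hCv : 0 ≤ Cv) (hv_bd : ∀ p, mem1 q p → |v p| ≤ Cv)
    (hCg : 0 ≤ Cg) (hg2 : 0 ≤ g2)
    (hg_bd : ∀ i ∈ Finset.Icc 1 q, ∀ t, 0 ≤ t → |g i t| ≤ Cg)
    (hg_lip : ∀ i ∈ Finset.Icc 1 q, ∀ t u, t ∈ Set.Icc 0 (ts i) → u ∈ Set.Icc 0 (ts i) →
      |g i t - g i u| ≤ g2 * |t - u|)
    {p : ℕ → ℝ} (hp : mem1 q p) {m : ℕ} (hm : m < q)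
    {u u' : ℝ} (hu : u ∈ Set.Ico (ts m) (ts (m + 1)))
    (hu' : u' ∈ Set.Ico (ts m) (ts (m + 1))) :
    |Jop q d ts lam Q fW phi v g p u - Jop q d ts lam Q fW phi v g p u'| ≤
      (g2 + Cg * Clam + Cv * Clam) * |u - u'| := by
  have hm0 : 0 ≤ ts m := ts_nonneg hts0 htsmono hm.le
  have hu0 : 0 ≤ u := le_trans hm0 hu.1
  have hu'0 : 0 ≤ u' := le_trans hm0 hu'.1
  have hdec : Jop q d ts lam Q fW phi v g p u - Jop q d ts lam Q fW phi v g p u' =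
      (Hop q ts lam g p u - Hop q ts lam g p u') +
      (Iop q d ts lam Q fW phi v p u - Iop q d ts lam Q fW phi v p u') := by
    rw [Jop, Jop, Gop, Gop, bSum_eq htsmono hm p hu, bSum_eq htsmono hm p hu']
    ring
  rw [hdec]
  refine le_trans (abs_add_le _ _) ?_
  have h1 := Hop_lip hts0 htsmono hClam hlam_meas hlam_bd hCg hg2 hg_bd hg_lip
    hp hm hu hu'
  have h2 := Iop_lip (phi := phi) hts0 htsmono hClam hlam_meas hlam_bd hQ_meas hQ_bd hQ_sum
    hfW_meas hfW_nonneg hfW_int hv_meas hCv hv_bd hp hu0 hu'0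
  calc _ ≤ (g2 + Cg * Clam) * |u - u'| + Clam * Cv * |u - u'| := add_le_add h1 h2
    _ = (g2 + Cg * Clam + Cv * Clam) * |u - u'| := by ring

lemma Jop_bd (hts0 : ts 0 = 0) (htsmono : ∀ i, i < q → ts i ≤ ts (i + 1))
    (hClam : 0 ≤ Clam)
    (hlam_meas : ∀ i, Measurable (lam i))
    (hlam_bd : ∀ i s, 0 ≤ s → lam i s ∈ Set.Icc 0 Clam)
    (hQ_meas : ∀ i j, Measurable (Q i j))
    (hQ_bd : ∀ i j s, 0 ≤ s → Q i j s ∈ Set.Icc (0:ℝ) 1)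
    (hQ_sum : ∀ i s, 0 ≤ s → ∑ j ∈ Finset.Icc 1 q, Q i j s = 1)
    (hfW_meas : Measurable fW)
    (hfW_nonneg : ∀ y, 0 ≤ fW y) (hfW_int : ∫ y : Fin d → ℝ, fW y = 1)
    (hv_meas : Measurable v)
    (hCv : 0 ≤ Cv) (hv_bd : ∀ p, mem1 q p → |v p| ≤ Cv)
    (hCg : 0 ≤ Cg)
    (hg_bd : ∀ i ∈ Finset.Icc 1 q, ∀ t, 0 ≤ t → |g i t| ≤ Cg)
    {p : ℕ → ℝ} (hp : mem1 q p) {u : ℝ} (hu : 0 ≤ u) (huq : u ≤ ts q) :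
    |Jop q d ts lam Q fW phi v g p u| ≤ Cg + Clam * Cv * ts q + Cv := by
  have h1 := Hop_bd hts0 htsmono hlam_bd hCg hg_bd hp hu
  have h2 : |Iop q d ts lam Q fW phi v p u| ≤ Clam * Cv * ts q := by
    have := Iop_lip (phi := phi) hts0 htsmono hClam hlam_meas hlam_bd hQ_meas hQ_bd hQ_sum
      hfW_meas hfW_nonneg hfW_int hv_meas hCv hv_bd hp hu le_rfl (u' := 0)
    rw [Iop_zero hts0 htsmono, sub_zero, sub_zero, abs_of_nonneg hu] at this
    refine le_trans this ?_
    exact mul_le_mul_of_nonneg_left huq (by positivity)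
  have h3 : |∑ i ∈ Finset.Icc 1 q,
      if ts i ≤ u then bTerm q d ts lam Q fW phi v p i else 0| ≤ Cv := by
    refine le_trans (Finset.abs_sum_le_sum_abs _ _) ?_
    have key : ∀ i ∈ Finset.Icc 1 q,
        |if ts i ≤ u then bTerm q d ts lam Q fW phi v p i else 0| ≤ p i * Cv := by
      intro i hi
      by_cases h : ts i ≤ u
      · rw [if_pos h]
        exact bTerm_bd hts0 htsmono hlam_bd hQ_bd hQ_sum hfW_nonneg hfW_int hCv
          hv_bd hp hi
      · rw [if_neg h, abs_zero]
        have := hp.1 i hi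
        positivity
    refine le_trans (Finset.sum_le_sum key) ?_
    rw [← Finset.sum_mul, hp.2, one_mul]
  rw [Jop, Gop]
  calc |Hop q ts lam g p u + (Iop q d ts lam Q fW phi v p u + _)| ≤ _ :=
        le_trans (abs_add_le _ _) (add_le_add le_rfl (abs_add_le _ _))
    _ ≤ Cg + Clam * Cv * ts q + Cv := by
        rw [← add_assoc]
        exact add_le_add (add_le_add h1 h2) h3

end Jop
section Grid
variable {q : ℕ} {ts : ℕ → ℝ}

lemma grid_subset {Δ : ℝ} (hΔpos : 0 < Δ) {m : ℕ}
    (h2d : 2 * Δ < ts (m + 1) - ts m) :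
    grid ts Δ m ⊆ Set.Ico (ts m) (ts (m + 1)) := by
  rintro u (⟨i, hi1, hile, rfl⟩ | rfl)
  · have h1 : (1:ℝ) ≤ (i:ℝ) := by exact_mod_cast hi1
    constructor
    · nlinarith
    · linarith
  · constructor <;> linarith

lemma grid_cover {Δ : ℝ} (hΔpos : 0 < Δ) {m : ℕ}
    (h2d : 2 * Δ < ts (m + 1) - ts m) {u : ℝ}
    (hu : u ∈ Set.Ico (ts m) (ts (m + 1))) :
    ∃ w ∈ grid ts Δ m, |u - w| ≤ Δ := by
  by_cases hc : ts (m + 1) - 2 * Δ ≤ u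
  · refine ⟨ts (m + 1) - Δ, Or.inr rfl, ?_⟩
    rw [abs_le]
    constructor
    · linarith
    · linarith [hu.2]
  · push_neg at hc
    set x := (u - ts m) / Δ with hxdef
    have hx0 : 0 ≤ x := div_nonneg (by linarith [hu.1]) hΔpos.le
    have hxmul : x * Δ = u - ts m := div_mul_cancel₀ _ (ne_of_gt hΔpos)
    rcases Nat.eq_zero_or_pos ⌈x⌉₊ with h0 | hpos
    · have hxle : x ≤ 0 := Nat.ceil_eq_zero.1 h0
      have hum : u = ts m := by nlinarith [hu.1]
      refine ⟨ts m + (1:ℕ) * Δ, Or.inl ⟨1, le_rfl, ?_, rfl⟩, ?_⟩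
      · push_cast; linarith
      · rw [hum, abs_le]; push_cast
        constructor <;> linarith
    · have hn1 : 1 ≤ ⌈x⌉₊ := hpos
      have hn1' : (1:ℝ) ≤ (⌈x⌉₊:ℝ) := by exact_mod_cast hn1
      have hcl : (⌈x⌉₊:ℝ) < x + 1 := Nat.ceil_lt_add_one hx0
      have hge : x ≤ (⌈x⌉₊:ℝ) := Nat.le_ceil x
      have hwle : ts m + (⌈x⌉₊:ℝ) * Δ ≤ ts (m + 1) - Δ := by nlinarith
      refine ⟨ts m + (⌈x⌉₊:ℕ) * Δ, Or.inl ⟨⌈x⌉₊, hn1, hwle, rfl⟩, ?_⟩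
      rw [abs_le]
      constructor
      · nlinarith
      · nlinarith

end Grid
/-- **Lemma 5.10 (time-discretization error of the maximization).** -/
theorem time_discretization_error
    (q d : ℕ) (hq : 1 ≤ q) (hd : 1 ≤ d)
    (ts : ℕ → ℝ) (hts0 : ts 0 = 0) (hts1 : 0 < ts 1)
    (htsmono : ∀ i, i < q → ts i ≤ ts (i + 1))
    (Clam : ℝ) (hClam : 0 ≤ Clam)
    (lam : ℕ → ℝ → ℝ) (hlam_meas : ∀ i, Measurable (lam i))
    (hlam_bd : ∀ i s, 0 ≤ s → lam i s ∈ Set.Icc 0 Clam)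
    (Q : ℕ → ℕ → ℝ → ℝ) (hQ_meas : ∀ i j, Measurable (Q i j))
    (hQ_bd : ∀ i j s, 0 ≤ s → Q i j s ∈ Set.Icc (0:ℝ) 1)
    (hQ_sum : ∀ i s, 0 ≤ s → ∑ j ∈ Finset.Icc 1 q, Q i j s = 1)
    (fW : (Fin d → ℝ) → ℝ) (hfW_meas : Measurable fW)
    (hfW_nonneg : ∀ y, 0 ≤ fW y) (hfW_int : ∫ y : Fin d → ℝ, fW y = 1)
    (phi : ℕ → Fin d → ℝ)
    (g : ℕ → ℝ → ℝ) (hg_meas : ∀ i, Measurable (g i))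
    (Cg g2 : ℝ) (hCg : 0 ≤ Cg) (hg2 : 0 ≤ g2)
    (hg_bd : ∀ i ∈ Finset.Icc 1 q, ∀ t, 0 ≤ t → |g i t| ≤ Cg)
    (hg_lip : ∀ i ∈ Finset.Icc 1 q, ∀ t u, t ∈ Set.Icc 0 (ts i) → u ∈ Set.Icc 0 (ts i) →
      |g i t - g i u| ≤ g2 * |t - u|)
    (v : (ℕ → ℝ) → ℝ) (hv_meas : Measurable v)
    (Cv lv : ℝ) (hCv : 0 ≤ Cv) (hlv : 0 ≤ lv)
    (hv_bd : ∀ p, mem1 q p → |v p| ≤ Cv)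
    (hv_lip : ∀ p p', mem1 q p → mem1 q p' → |v p - v p'| ≤ lv * l1 q p p')
    (Δ : ℝ) (hΔpos : 0 < Δ)
    (hΔ : ∀ i j, i ≤ q → j ≤ q → ts i ≠ ts j → 2 * Δ < |ts i - ts j|)
    (m : ℕ) (hm : m < q) (hmM : ts m < ts (m + 1))
    (p : ℕ → ℝ) (hp : mem1 q p) :
    |sSup (Jop q d ts lam Q fW phi v g p '' Set.Ico (ts m) (ts (m + 1))) -
        sSup (Jop q d ts lam Q fW phi v g p '' grid ts Δ m)| ≤
      (g2 + Cg * Clam + Cv * Clam) * Δ := by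
  have hm1q : m + 1 ≤ q := hm
  have htsq : ts (m + 1) ≤ ts q := ts_le htsmono hm1q le_rfl
  have hm0 : 0 ≤ ts m := ts_nonneg hts0 htsmono hm.le
  have h2d : 2 * Δ < ts (m + 1) - ts m := by
    have := hΔ (m + 1) m hm1q hm.le (ne_of_gt hmM)
    rwa [abs_of_pos (sub_pos.2 hmM)] at this
  have hgsub : grid ts Δ m ⊆ Set.Ico (ts m) (ts (m + 1)) := grid_subset hΔpos h2d
  set J := Jop q d ts lam Q fW phi v g p with hJdef
  set A := J '' Set.Ico (ts m) (ts (m + 1)) with hAdef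
  set B := J '' grid ts Δ m with hBdef
  have hBA : B ⊆ A := Set.image_mono hgsub
  have hAne : A.Nonempty := ⟨J (ts m), ⟨ts m, ⟨le_rfl, hmM⟩, rfl⟩⟩
  have hBne : B.Nonempty := ⟨J (ts (m + 1) - Δ), ⟨_, Or.inr rfl, rfl⟩⟩
  have hJbd : ∀ w ∈ Set.Ico (ts m) (ts (m + 1)), |J w| ≤ Cg + Clam * Cv * ts q + Cv := by
    intro w hw
    exact Jop_bd hts0 htsmono hClam hlam_meas hlam_bd hQ_meas hQ_bd hQ_sum
      hfW_meas hfW_nonneg hfW_int hv_meas hCv hv_bd hCg hg_bd hp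
      (le_trans hm0 hw.1) (le_trans hw.2.le htsq)
  have hAbdd : BddAbove A := by
    refine ⟨Cg + Clam * Cv * ts q + Cv, ?_⟩
    rintro a ⟨w, hw, rfl⟩
    exact le_trans (le_abs_self _) (hJbd w hw)
  have hBbdd : BddAbove B := hAbdd.mono hBA
  have hL : 0 ≤ g2 + Cg * Clam + Cv * Clam := by positivity
  have h1 : sSup B ≤ sSup A := csSup_le_csSup hAbdd hBne hBA
  have h2 : sSup A ≤ sSup B + (g2 + Cg * Clam + Cv * Clam) * Δ := by
    apply csSup_le hAne
    rintro a ⟨w, hw, rfl⟩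
    obtain ⟨w', hw'g, hww'⟩ := grid_cover hΔpos h2d hw
    have hlip := Jop_lip (phi := phi) hts0 htsmono hClam hlam_meas hlam_bd hQ_meas hQ_bd
      hQ_sum hfW_meas hfW_nonneg hfW_int hv_meas hCv hv_bd hCg hg2 hg_bd hg_lip
      hp hm hw (hgsub hw'g)
    have hJw' : J w' ≤ sSup B := le_csSup hBbdd ⟨w', hw'g, rfl⟩
    have hmm : (g2 + Cg * Clam + Cv * Clam) * |w - w'| ≤
        (g2 + Cg * Clam + Cv * Clam) * Δ := mul_le_mul_of_nonneg_left hww' hL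
    have := le_abs_self (J w - J w')
    linarith
  rw [abs_of_nonneg (sub_nonneg.2 h1)]
  linarith

end PDMP
end
end
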